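/- arXiv:1307.7158 — 9 statements merged into one kernel-verified Lean document; each statement's English description precedes it below -/
import Mathlib

section
/- Let $f_\varepsilon, f \in L^1(\mathbb{R}^d)$ for $\varepsilon \in (0,1]$ be nonnegative, continuous, radial, radially nonincreasing functions such that $f_\varepsilon \to f$ weakly as measures on $\mathbb{R}^d$ as $\varepsilon \to 0$. Then $f_\varepsilon(x) \to f(x)$ pointwise for every $x \neq 0$. -/
open MeasureTheory Filter Set Topology

/-!
Fix `x ≠ 0` and test the weak convergence against a tent function supported on a thin shell
`a < ‖y‖ < b` next to the sphere through `x`. On the inner shell (`b = ‖x‖`) a radially nonincreasing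
function is at least its value at `x`, so its weighted average there bounds `fε ε x` from above;
as `ε → 0` this average tends to that of `f`, which is at most `f` at radius `a`, hence close to
`f x` by continuity. The outer shell (`a = ‖x‖`) gives the lower bound in the same way.
-/

theorem integral_mul_le_mul_integral_of_le {α : Type*} [MeasurableSpace α] {μ : Measure α}
    {φ g : α → ℝ} {C : ℝ} (hφ : 0 ≤ φ) (hφi : Integrable φ μ)
    (hφg : Integrable (fun y => φ y * g y) μ) (h : ∀ y, 0 < φ y → g y ≤ C) :
    ∫ y, φ y * g y ∂μ ≤ C * ∫ y, φ y ∂μ := by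
  rw [← integral_const_mul]
  refine integral_mono hφg (hφi.const_mul C) fun y => ?_
  rcases (hφ y).eq_or_lt with h0 | hpos
  · simp [← h0]
  · rw [mul_comm C]
    exact mul_le_mul_of_nonneg_left (h y hpos) hpos.le

theorem mul_integral_le_integral_mul_of_le {α : Type*} [MeasurableSpace α] {μ : Measure α}
    {φ g : α → ℝ} {C : ℝ} (hφ : 0 ≤ φ) (hφi : Integrable φ μ)
    (hφg : Integrable (fun y => φ y * g y) μ) (h : ∀ y, 0 < φ y → C ≤ g y) :
    C * ∫ y, φ y ∂μ ≤ ∫ y, φ y * g y ∂μ := by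
  rw [← integral_const_mul]
  refine integral_mono (hφi.const_mul C) hφg fun y => ?_
  rcases (hφ y).eq_or_lt with h0 | hpos
  · simp [← h0]
  · rw [mul_comm C]
    exact mul_le_mul_of_nonneg_left (h y hpos) hpos.le

section Shell

variable {E : Type*} [NormedAddCommGroup E]

def RadiallyAntitone (g : E → ℝ) : Prop :=
  ∀ x y : E, ‖x‖ ≤ ‖y‖ → g y ≤ g x

noncomputable def shellBump (a b : ℝ) (y : E) : ℝ :=
  max 0 (min (‖y‖ - a) (b - ‖y‖))

theorem continuous_shellBump (a b : ℝ) : Continuous (shellBump (E := E) a b) := by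
  unfold shellBump
  fun_prop

theorem shellBump_nonneg (a b : ℝ) : 0 ≤ shellBump (E := E) a b :=
  fun _ => le_max_left _ _

theorem shellBump_pos_iff {a b : ℝ} {y : E} : 0 < shellBump a b y ↔ a < ‖y‖ ∧ ‖y‖ < b := by
  simp [shellBump]

variable [ProperSpace E]

theorem hasCompactSupport_shellBump (a b : ℝ) : HasCompactSupport (shellBump (E := E) a b) := by
  refine HasCompactSupport.intro (isCompact_closedBall 0 b) fun y hy => ?_
  rw [Metric.mem_closedBall, dist_zero_right, not_le] at hy
  exact max_eq_left ((min_le_right _ _).trans (by linarith))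

variable [MeasurableSpace E] [BorelSpace E] {μ : Measure E} [IsFiniteMeasureOnCompacts μ]

theorem integrable_shellBump (a b : ℝ) : Integrable (shellBump a b) μ :=
  (continuous_shellBump a b).integrable_of_hasCompactSupport (hasCompactSupport_shellBump a b)

theorem integrable_shellBump_mul (a b : ℝ) {g : E → ℝ} (hg : Continuous g) :
    Integrable (fun y => shellBump a b y * g y) μ :=
  ((continuous_shellBump a b).mul hg).integrable_of_hasCompactSupport
    (hasCompactSupport_shellBump a b).mul_right

theorem integral_shellBump_pos [NormedSpace ℝ E] [Nontrivial E] [μ.IsOpenPosMeasure]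
    {a b : ℝ} (ha : 0 ≤ a) (hab : a < b) : 0 < ∫ y, shellBump a b y ∂μ := by
  obtain ⟨z, hz⟩ := exists_norm_eq E (show 0 ≤ (a + b) / 2 by linarith)
  have hzpos : 0 < shellBump a b z := shellBump_pos_iff.2 (by constructor <;> linarith)
  rw [integral_pos_iff_support_of_nonneg (shellBump_nonneg a b) (integrable_shellBump a b)]
  exact (continuous_shellBump a b).isOpen_support.measure_pos μ ⟨z, hzpos.ne'⟩

variable [NormedSpace ℝ E] [μ.IsOpenPosMeasure] {ι : Type*} {l : Filter ι}
  {F : ι → E → ℝ} {f : E → ℝ}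

theorem eventually_apply_lt_of_norm_lt (hF : ∀ᶠ i in l, Continuous (F i) ∧ RadiallyAntitone (F i))
    (hf : Continuous f) (hf' : RadiallyAntitone f)
    (hlim : ∀ φ : E → ℝ, Continuous φ → HasCompactSupport φ →
      Tendsto (fun i => ∫ y, φ y * F i y ∂μ) l (𝓝 (∫ y, φ y * f y ∂μ)))
    {x z : E} (hzx : ‖z‖ < ‖x‖) {c : ℝ} (hc : f z < c) : ∀ᶠ i in l, F i x < c := by
  have : Nontrivial E := ⟨⟨x, 0, norm_pos_iff.1 ((norm_nonneg z).trans_lt hzx)⟩⟩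
  set φ : E → ℝ := shellBump ‖z‖ ‖x‖
  have hI : 0 < ∫ y, φ y ∂μ := integral_shellBump_pos (norm_nonneg z) hzx
  have hfφ : ∫ y, φ y * f y ∂μ ≤ f z * ∫ y, φ y ∂μ :=
    integral_mul_le_mul_integral_of_le (shellBump_nonneg _ _) (integrable_shellBump _ _)
      (integrable_shellBump_mul _ _ hf) fun y hy => hf' z y (shellBump_pos_iff.1 hy).1.le
  have hlt : ∀ᶠ i in l, ∫ y, φ y * F i y ∂μ < c * ∫ y, φ y ∂μ :=
    (hlim φ (continuous_shellBump _ _) (hasCompactSupport_shellBump _ _)).eventually_lt_const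
      (hfφ.trans_lt (mul_lt_mul_of_pos_right hc hI))
  filter_upwards [hF, hlt] with i ⟨hFc, hFa⟩ hi
  have hFφ : F i x * ∫ y, φ y ∂μ ≤ ∫ y, φ y * F i y ∂μ :=
    mul_integral_le_integral_mul_of_le (shellBump_nonneg _ _) (integrable_shellBump _ _)
      (integrable_shellBump_mul _ _ hFc) fun y hy => hFa y x (shellBump_pos_iff.1 hy).2.le
  exact lt_of_mul_lt_mul_right (hFφ.trans_lt hi) hI.le

theorem eventually_lt_apply_of_norm_lt (hF : ∀ᶠ i in l, Continuous (F i) ∧ RadiallyAntitone (F i))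
    (hf : Continuous f) (hf' : RadiallyAntitone f)
    (hlim : ∀ φ : E → ℝ, Continuous φ → HasCompactSupport φ →
      Tendsto (fun i => ∫ y, φ y * F i y ∂μ) l (𝓝 (∫ y, φ y * f y ∂μ)))
    {x z : E} (hxz : ‖x‖ < ‖z‖) {c : ℝ} (hc : c < f z) : ∀ᶠ i in l, c < F i x := by
  have : Nontrivial E := ⟨⟨z, 0, norm_pos_iff.1 ((norm_nonneg x).trans_lt hxz)⟩⟩
  set φ : E → ℝ := shellBump ‖x‖ ‖z‖
  have hI : 0 < ∫ y, φ y ∂μ := integral_shellBump_pos (norm_nonneg x) hxz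
  have hfφ : f z * ∫ y, φ y ∂μ ≤ ∫ y, φ y * f y ∂μ :=
    mul_integral_le_integral_mul_of_le (shellBump_nonneg _ _) (integrable_shellBump _ _)
      (integrable_shellBump_mul _ _ hf) fun y hy => hf' y z (shellBump_pos_iff.1 hy).2.le
  have hlt : ∀ᶠ i in l, c * ∫ y, φ y ∂μ < ∫ y, φ y * F i y ∂μ :=
    (hlim φ (continuous_shellBump _ _) (hasCompactSupport_shellBump _ _)).eventually_const_lt
      ((mul_lt_mul_of_pos_right hc hI).trans_le hfφ)
  filter_upwards [hF, hlt] with i ⟨hFc, hFa⟩ hi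
  have hFφ : ∫ y, φ y * F i y ∂μ ≤ F i x * ∫ y, φ y ∂μ :=
    integral_mul_le_mul_integral_of_le (shellBump_nonneg _ _) (integrable_shellBump _ _)
      (integrable_shellBump_mul _ _ hFc) fun y hy => hFa x y (shellBump_pos_iff.1 hy).1.le
  exact lt_of_mul_lt_mul_right (hi.trans_le hFφ) hI.le

theorem tendsto_apply_of_radiallyAntitone
    (hF : ∀ᶠ i in l, Continuous (F i) ∧ RadiallyAntitone (F i))
    (hf : Continuous f) (hf' : RadiallyAntitone f)
    (hlim : ∀ φ : E → ℝ, Continuous φ → HasCompactSupport φ →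
      Tendsto (fun i => ∫ y, φ y * F i y ∂μ) l (𝓝 (∫ y, φ y * f y ∂μ)))
    {x : E} (hx : x ≠ 0) : Tendsto (fun i => F i x) l (𝓝 (f x)) := by
  have hx0 : 0 < ‖x‖ := norm_pos_iff.2 hx
  have hray : Tendsto (fun t : ℝ => f (t • x)) (𝓝 1) (𝓝 (f x)) := by
    have : Continuous fun t : ℝ => f (t • x) := by fun_prop
    simpa using this.tendsto 1
  refine tendsto_order.2 ⟨fun c hc => ?_, fun c hc => ?_⟩
  · obtain ⟨t, hct, ht⟩ := ((hray.eventually (lt_mem_nhds hc)).filter_mono nhdsWithin_le_nhds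
      |>.and (self_mem_nhdsWithin : Ioi (1 : ℝ) ∈ 𝓝[>] 1)).exists
    refine eventually_lt_apply_of_norm_lt hF hf hf' hlim ?_ hct
    rw [norm_smul, Real.norm_of_nonneg (zero_le_one.trans ht.le)]
    exact lt_mul_of_one_lt_left hx0 ht
  · obtain ⟨t, hct, ht⟩ := ((hray.eventually (gt_mem_nhds hc)).filter_mono nhdsWithin_le_nhds
      |>.and (Ioo_mem_nhdsLT one_pos)).exists
    refine eventually_apply_lt_of_norm_lt hF hf hf' hlim ?_ hct
    rw [norm_smul, Real.norm_of_nonneg ht.1.le]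
    exact mul_lt_of_lt_one_left hx0 ht.2

end Shell

theorem pointwise_convergence_of_weak_unimodal_general
    {d : ℕ}
    (fε : ℝ → EuclideanSpace ℝ (Fin d) → ℝ) (f : EuclideanSpace ℝ (Fin d) → ℝ)
    (hcont : ∀ ε ∈ Set.Ioc (0:ℝ) 1, Continuous (fε ε))
    (hfcont : Continuous f)
    (hmono : ∀ ε ∈ Set.Ioc (0:ℝ) 1, ∀ x y : EuclideanSpace ℝ (Fin d), ‖x‖ ≤ ‖y‖ → fε ε y ≤ fε ε x)
    (hfmono : ∀ x y : EuclideanSpace ℝ (Fin d), ‖x‖ ≤ ‖y‖ → f y ≤ f x)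
    (hweak : ∀ φ : EuclideanSpace ℝ (Fin d) → ℝ, Continuous φ → (∃ M, ∀ x, |φ x| ≤ M) →
      Tendsto (fun ε => ∫ x, φ x * fε ε x) (nhdsWithin 0 (Set.Ioi 0))
        (nhds (∫ x, φ x * f x))) :
    ∀ x : EuclideanSpace ℝ (Fin d), x ≠ 0 →
      Tendsto (fun ε => fε ε x) (nhdsWithin 0 (Set.Ioi 0)) (nhds (f x)) := by
  intro x hx
  have hF : ∀ᶠ ε in 𝓝[>] (0 : ℝ), Continuous (fε ε) ∧ RadiallyAntitone (fε ε) := by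
    filter_upwards [Ioc_mem_nhdsGT one_pos] with ε hε using ⟨hcont ε hε, hmono ε hε⟩
  refine tendsto_apply_of_radiallyAntitone (μ := volume) hF hfcont hfmono
    (fun φ hφ hφs => hweak φ hφ ?_) hx
  obtain ⟨M, hM⟩ := hφ.bounded_above_of_compact_support hφs
  exact ⟨M, fun y => (Real.norm_eq_abs _).symm.trans_le (hM y)⟩

theorem pointwise_convergence_of_weak_unimodal
    {d : ℕ} (hd : 1 ≤ d)
    (fε : ℝ → EuclideanSpace ℝ (Fin d) → ℝ) (f : EuclideanSpace ℝ (Fin d) → ℝ)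
    (hint : ∀ ε ∈ Set.Ioc (0:ℝ) 1, Integrable (fε ε))
    (hfint : Integrable f)
    (hnn : ∀ ε ∈ Set.Ioc (0:ℝ) 1, ∀ x, 0 ≤ fε ε x)
    (hfnn : ∀ x, 0 ≤ f x)
    (hcont : ∀ ε ∈ Set.Ioc (0:ℝ) 1, Continuous (fε ε))
    (hfcont : Continuous f)
    (hrad : ∀ ε ∈ Set.Ioc (0:ℝ) 1, ∀ x y : EuclideanSpace ℝ (Fin d), ‖x‖ = ‖y‖ → fε ε x = fε ε y)
    (hfrad : ∀ x y : EuclideanSpace ℝ (Fin d), ‖x‖ = ‖y‖ → f x = f y)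
    (hmono : ∀ ε ∈ Set.Ioc (0:ℝ) 1, ∀ x y : EuclideanSpace ℝ (Fin d), ‖x‖ ≤ ‖y‖ → fε ε y ≤ fε ε x)
    (hfmono : ∀ x y : EuclideanSpace ℝ (Fin d), ‖x‖ ≤ ‖y‖ → f y ≤ f x)
    (hweak : ∀ φ : EuclideanSpace ℝ (Fin d) → ℝ, Continuous φ → (∃ M, ∀ x, |φ x| ≤ M) →
      Tendsto (fun ε => ∫ x, φ x * fε ε x) (nhdsWithin 0 (Set.Ioi 0))
        (nhds (∫ x, φ x * f x))) :
    ∀ x : EuclideanSpace ℝ (Fin d), x ≠ 0 →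
      Tendsto (fun ε => fε ε x) (nhdsWithin 0 (Set.Ioi 0)) (nhds (f x)) :=
  pointwise_convergence_of_weak_unimodal_general fε f hcont hfcont hmono hfmono hweak
end

section
/- Let $f_\varepsilon, f$ be as above (nonnegative, continuous, radial, radially nonincreasing, $L^1$, converging weakly). Then for any $0 < a < b$, $\limsup_{\varepsilon\to 0} f_\varepsilon(b)\, a^{d-1} \le f(a)\, b^{d-1}$, where $f(r)$ denotes the common value of $f$ on the sphere of radius $r$. -/
open MeasureTheory Filter Set

theorem limsup_bound_of_weak_unimodal_profiles
    {d : ℕ} (hd : 1 ≤ d)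
    (fε : ℝ → ℝ → ℝ) (f : ℝ → ℝ)
    (hint : ∀ ε ∈ Set.Ioc (0:ℝ) 1, IntegrableOn (fun r => fε ε r * r ^ (d - 1)) (Set.Ioi 0))
    (hfint : IntegrableOn (fun r => f r * r ^ (d - 1)) (Set.Ioi 0))
    (hnn : ∀ ε ∈ Set.Ioc (0:ℝ) 1, ∀ r > (0:ℝ), 0 ≤ fε ε r)
    (hfnn : ∀ r > (0:ℝ), 0 ≤ f r)
    (hcont : ∀ ε ∈ Set.Ioc (0:ℝ) 1, ContinuousOn (fε ε) (Set.Ioi 0))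
    (hfcont : ContinuousOn f (Set.Ioi 0))
    (hmono : ∀ ε ∈ Set.Ioc (0:ℝ) 1, AntitoneOn (fε ε) (Set.Ioi 0))
    (hfmono : AntitoneOn f (Set.Ioi 0))
    (hweak : ∀ a b : ℝ, 0 < a → a < b →
      Tendsto (fun ε => ∫ r in a..b, fε ε r * r ^ (d - 1)) (nhdsWithin 0 (Set.Ioi 0))
        (nhds (∫ r in a..b, f r * r ^ (d - 1)))) :
    ∀ a b : ℝ, 0 < a → a < b →
      Filter.limsup (fun ε => fε ε b * a ^ (d - 1)) (nhdsWithin 0 (Set.Ioi 0))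
        ≤ f a * b ^ (d - 1) := by
  intro a b ha hab
  have hba : (0:ℝ) < b - a := by linarith
  have hb : (0:ℝ) < b := lt_trans ha hab
  have hsub : Set.uIcc a b ⊆ Set.Ioi (0:ℝ) := by
    rw [Set.uIcc_of_le hab.le]
    intro x hx
    exact lt_of_lt_of_le ha hx.1
  -- Step 1: a.e. (eventually) bound fε ε b * a^(d-1) ≤ Iε/(b-a)
  have hev : ∀ᶠ ε in nhdsWithin 0 (Set.Ioi 0),
      fε ε b * a ^ (d - 1) ≤ (∫ r in a..b, fε ε r * r ^ (d - 1)) / (b - a) := by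
    filter_upwards [Ioc_mem_nhdsGT_of_mem (Set.left_mem_Ico.2 one_pos)] with ε hε
    rw [le_div_iff₀ hba]
    have hInt : IntervalIntegrable (fun r => fε ε r * r ^ (d - 1)) volume a b :=
      ((hint ε hε).mono_set hsub).intervalIntegrable
    have hconst : IntervalIntegrable (fun _ : ℝ => fε ε b * a ^ (d - 1)) volume a b :=
      intervalIntegrable_const
    have hle : ∫ r in a..b, (fε ε b * a ^ (d - 1)) ≤ ∫ r in a..b, fε ε r * r ^ (d - 1) := by
      apply intervalIntegral.integral_mono_on hab.le hconst hInt
      intro x hx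
      have hx0 : (0:ℝ) < x := lt_of_lt_of_le ha hx.1
      exact mul_le_mul (hmono ε hε hx0 hb hx.2) (pow_le_pow_left₀ ha.le hx.1 _)
        (pow_nonneg ha.le _) (hnn ε hε x hx0)
    calc fε ε b * a ^ (d - 1) * (b - a)
        = ∫ r in a..b, (fε ε b * a ^ (d - 1)) := by
          rw [intervalIntegral.integral_const, smul_eq_mul]; ring
      _ ≤ ∫ r in a..b, fε ε r * r ^ (d - 1) := hle
  -- Step 2: tendsto of the divided integrals
  have htend : Tendsto (fun ε => (∫ r in a..b, fε ε r * r ^ (d - 1)) / (b - a))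
      (nhdsWithin 0 (Set.Ioi 0)) (nhds ((∫ r in a..b, f r * r ^ (d - 1)) / (b - a))) :=
    (hweak a b ha hab).div_const _
  have hlimsup2 : Filter.limsup (fun ε => (∫ r in a..b, fε ε r * r ^ (d - 1)) / (b - a))
      (nhdsWithin 0 (Set.Ioi 0)) = (∫ r in a..b, f r * r ^ (d - 1)) / (b - a) :=
    htend.limsup_eq
  -- Step 3: bound on the limit integral
  have hI : (∫ r in a..b, f r * r ^ (d - 1)) / (b - a) ≤ f a * b ^ (d - 1) := by
    rw [div_le_iff₀ hba]
    have hInt : IntervalIntegrable (fun r => f r * r ^ (d - 1)) volume a b :=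
      (hfint.mono_set hsub).intervalIntegrable
    have hle : ∫ r in a..b, f r * r ^ (d - 1) ≤ ∫ r in a..b, (f a * b ^ (d - 1)) := by
      apply intervalIntegral.integral_mono_on hab.le hInt intervalIntegrable_const
      intro x hx
      have hx0 : (0:ℝ) < x := lt_of_lt_of_le ha hx.1
      exact mul_le_mul (hfmono ha hx0 hx.1) (pow_le_pow_left₀ hx0.le hx.2 _)
        (pow_nonneg hx0.le _) (hfnn a ha)
    calc ∫ r in a..b, f r * r ^ (d - 1)
        ≤ ∫ r in a..b, (f a * b ^ (d - 1)) := hle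
      _ = f a * b ^ (d - 1) * (b - a) := by
          rw [intervalIntegral.integral_const, smul_eq_mul]; ring
  -- Combine
  have hlb : ∀ᶠ ε in nhdsWithin 0 (Set.Ioi 0), 0 ≤ fε ε b * a ^ (d - 1) := by
    filter_upwards [Ioc_mem_nhdsGT_of_mem (Set.left_mem_Ico.2 one_pos)] with ε hε
    exact mul_nonneg (hnn ε hε b hb) (pow_nonneg ha.le _)
  have hco : Filter.IsCoboundedUnder (· ≤ ·) (nhdsWithin 0 (Set.Ioi 0))
      (fun ε => fε ε b * a ^ (d - 1)) :=
    Filter.IsBoundedUnder.isCoboundedUnder_le ⟨0, by simpa using hlb⟩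
  calc Filter.limsup (fun ε => fε ε b * a ^ (d - 1)) (nhdsWithin 0 (Set.Ioi 0))
      ≤ Filter.limsup (fun ε => (∫ r in a..b, fε ε r * r ^ (d - 1)) / (b - a))
        (nhdsWithin 0 (Set.Ioi 0)) := by
        apply Filter.limsup_le_limsup hev hco htend.isBoundedUnder_le
    _ = (∫ r in a..b, f r * r ^ (d - 1)) / (b - a) := hlimsup2
    _ ≤ f a * b ^ (d - 1) := hI
end

section
/- Let $p_t:\mathbb{R}^d\to[0,\infty)$, $t>0$, be a family of probability densities satisfying $p_t * p_s = p_{t+s}$, each radial and radially nonincreasing, with $\sup_{y\in B(0,\rho)^c} p_t(y) < \infty$ for every $\rho>0$ and $t>0$. Then for each $t>0$ the function $x \mapsto \int_{\mathbb{R}^d} p_{t/2}(x-y)p_{t/2}(y)\,dy$ is continuous on $\mathbb{R}^d\setminus\{0\}$. -/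
/-!
Cut `q = p (t / 2)` at the radius `ρ = ‖x₀‖ / 4` into `u = 1_{B(0,ρ)} q`, which is
integrable, and `v = 1_{B(0,ρ)ᶜ} q`, which is bounded. For `‖x‖ ≥ 2ρ` the points `t` and
`x - t` cannot both lie in the ball, so near `x₀` we have `q ⋆ q = q ⋆ v + v ⋆ u`. A
convolution of an integrable function with a bounded one is continuous, because translation
is continuous in `L¹`.
-/

open MeasureTheory Filter Set Metric ContinuousLinearMap
open scoped Topology Convolution

namespace MeasureTheory

variable {𝕜 G E E' F : Type*} [NontriviallyNormedField 𝕜]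
  [NormedAddCommGroup E] [NormedAddCommGroup E'] [NormedAddCommGroup F]
  [NormedSpace 𝕜 E] [NormedSpace 𝕜 E'] [NormedSpace 𝕜 F]
  (L : E →L[𝕜] E' →L[𝕜] F) {f : G → E} {g : G → E'}

section TopologicalGroup

variable [AddCommGroup G] [TopologicalSpace G] [IsTopologicalAddGroup G]
  [MeasurableSpace G] [BorelSpace G] {μ : Measure G} [μ.IsAddLeftInvariant] [μ.IsNegInvariant]

theorem tendsto_integral_norm_comp_sub_left_sub [μ.InnerRegularCompactLTTop]
    [IsLocallyFiniteMeasure μ] (hg : Integrable g μ) (x₀ : G) :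
    Tendsto (fun x => ∫ t, ‖g (x - t) - g (x₀ - t)‖ ∂μ) (𝓝 x₀) (𝓝 0) := by
  let Φ : C(G × G, G) := ⟨fun z => z.1 - z.2, continuous_sub⟩
  have hΦ (x : G) : MeasurePreserving (Φ.curry x) μ μ := Measure.measurePreserving_sub_left μ x
  let T (x : G) : Lp E' 1 μ := Lp.compMeasurePreserving (Φ.curry x) (hΦ x) (hg.toL1 g)
  have hT : Continuous T :=
    continuous_const.compMeasurePreservingLp (map_continuous Φ.curry) hΦ ENNReal.one_ne_top
  have hT_ae (x : G) : T x =ᵐ[μ] fun t => g (x - t) :=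
    (Lp.coeFn_compMeasurePreserving _ (hΦ x)).trans
      ((hΦ x).quasiMeasurePreserving.ae_eq_comp hg.coeFn_toL1)
  have hT_dist (x : G) : ∫ t, ‖g (x - t) - g (x₀ - t)‖ ∂μ = ‖T x - T x₀‖ := by
    rw [L1.norm_eq_integral_norm]
    refine integral_congr_ae ?_
    filter_upwards [Lp.coeFn_sub (T x) (T x₀), hT_ae x, hT_ae x₀] with t hsub hx hx₀
    rw [hsub, Pi.sub_apply, hx, hx₀]
  simp_rw [hT_dist]
  simpa using ((hT.tendsto x₀).sub_const (T x₀)).norm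

theorem convolutionExistsAt_of_bounded_of_integrable {C : ℝ} (hf : AEStronglyMeasurable f μ)
    (hfC : ∀ᵐ t ∂μ, ‖f t‖ ≤ C) (hg : Integrable g μ) (x : G) :
    ConvolutionExistsAt f g x L μ := by
  have hgx : Integrable (fun t => g (x - t)) μ := hg.comp_sub_left x
  refine (hgx.norm.const_mul (‖L‖ * C)).mono' (L.aestronglyMeasurable_comp₂ hf hgx.1) ?_
  filter_upwards [hfC] with t ht
  calc ‖L (f t) (g (x - t))‖ ≤ ‖L‖ * ‖f t‖ * ‖g (x - t)‖ := L.le_opNorm₂ _ _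
    _ ≤ ‖L‖ * C * ‖g (x - t)‖ := by gcongr

theorem convolutionExistsAt_of_integrable_of_bounded {C : ℝ} (hf : Integrable f μ)
    (hg : AEStronglyMeasurable g μ) (hgC : ∀ᵐ t ∂μ, ‖g t‖ ≤ C) (x : G) :
    ConvolutionExistsAt f g x L μ :=
  convolutionExistsAt_flip.mp (convolutionExistsAt_of_bounded_of_integrable L.flip hg hgC hf x)

variable [NormedSpace ℝ F]

theorem norm_convolution_sub_le {C : ℝ} (hf : AEStronglyMeasurable f μ)
    (hfC : ∀ᵐ t ∂μ, ‖f t‖ ≤ C) (hg : Integrable g μ) (x x₀ : G) :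
    ‖(f ⋆[L, μ] g) x - (f ⋆[L, μ] g) x₀‖ ≤
      ‖L‖ * C * ∫ t, ‖g (x - t) - g (x₀ - t)‖ ∂μ := by
  have hdiff : Integrable (fun t => ‖g (x - t) - g (x₀ - t)‖) μ :=
    ((hg.comp_sub_left x).sub (hg.comp_sub_left x₀)).norm
  rw [convolution_def, convolution_def,
    ← integral_sub (convolutionExistsAt_of_bounded_of_integrable L hf hfC hg x)
      (convolutionExistsAt_of_bounded_of_integrable L hf hfC hg x₀),
    ← integral_const_mul]
  refine norm_integral_le_of_norm_le (hdiff.const_mul _) ?_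
  filter_upwards [hfC] with t ht
  calc ‖L (f t) (g (x - t)) - L (f t) (g (x₀ - t))‖
      = ‖L (f t) (g (x - t) - g (x₀ - t))‖ := by rw [map_sub]
    _ ≤ ‖L‖ * ‖f t‖ * ‖g (x - t) - g (x₀ - t)‖ := L.le_opNorm₂ _ _
    _ ≤ ‖L‖ * C * ‖g (x - t) - g (x₀ - t)‖ := by gcongr

variable [μ.InnerRegularCompactLTTop] [IsLocallyFiniteMeasure μ]

theorem continuous_convolution_of_bounded_of_integrable {C : ℝ}
    (hf : AEStronglyMeasurable f μ) (hfC : ∀ᵐ t ∂μ, ‖f t‖ ≤ C) (hg : Integrable g μ) :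
    Continuous (f ⋆[L, μ] g) := by
  refine continuous_iff_continuousAt.mpr fun x₀ => tendsto_iff_norm_sub_tendsto_zero.mpr ?_
  refine squeeze_zero (fun _ => norm_nonneg _)
    (fun x => norm_convolution_sub_le L hf hfC hg x x₀) ?_
  simpa using (tendsto_integral_norm_comp_sub_left_sub hg x₀).const_mul (‖L‖ * C)

theorem continuous_convolution_of_integrable_of_bounded {C : ℝ} (hf : Integrable f μ)
    (hg : AEStronglyMeasurable g μ) (hgC : ∀ᵐ t ∂μ, ‖g t‖ ≤ C) :
    Continuous (f ⋆[L, μ] g) := by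
  rw [← convolution_flip]
  exact continuous_convolution_of_bounded_of_integrable L.flip hg hgC hf

end TopologicalGroup

variable [NormedSpace ℝ F]

theorem convolution_eq_add_indicator_of_two_mul_le_norm [SeminormedAddCommGroup G]
    [MeasurableSpace G] {μ : Measure G} {ρ : ℝ} {x : G} (hx : 2 * ρ ≤ ‖x‖)
    (h₁ : ConvolutionExistsAt f ((ball 0 ρ)ᶜ.indicator g) x L μ)
    (h₂ : ConvolutionExistsAt ((ball 0 ρ)ᶜ.indicator f) ((ball 0 ρ).indicator g) x L μ) :
    (f ⋆[L, μ] g) x = (f ⋆[L, μ] (ball 0 ρ)ᶜ.indicator g) x +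
      ((ball 0 ρ)ᶜ.indicator f ⋆[L, μ] (ball 0 ρ).indicator g) x := by
  simp only [convolution_def]
  rw [← integral_add h₁ h₂]
  congr 1 with t
  by_cases ht : x - t ∈ ball 0 ρ
  · have ht' : t ∈ (ball (0 : G) ρ)ᶜ := by
      have := norm_sub_norm_le x (x - t)
      rw [sub_sub_cancel] at this
      rw [mem_ball_zero_iff] at ht
      simpa using (by linarith : ρ ≤ ‖t‖)
    simp [ht, ht']
  · simp [ht]

end MeasureTheory

theorem convolution_square_continuous_away_from_origin_general
    {d : ℕ}
    (p : ℝ → EuclideanSpace ℝ (Fin d) → ℝ)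
    (hnn : ∀ t > (0:ℝ), ∀ x, 0 ≤ p t x)
    (hint : ∀ t > (0:ℝ), Integrable (p t))
    (hbdd : ∀ ρ > (0:ℝ), ∀ t > (0:ℝ), ∃ M : ℝ, ∀ y : EuclideanSpace ℝ (Fin d),
      ρ ≤ ‖y‖ → p t y ≤ M) :
    ∀ t > (0:ℝ), ContinuousOn
      (fun x : EuclideanSpace ℝ (Fin d) => ∫ y, p (t / 2) (x - y) * p (t / 2) y)
      {x | x ≠ 0} := by
  intro t ht x₀ hx₀
  have ht₂ : 0 < t / 2 := half_pos ht
  set q := p (t / 2)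
  set ρ := ‖x₀‖ / 4 with hρ_def
  have hρ : 0 < ρ := by have := norm_pos_iff.mpr hx₀; positivity
  obtain ⟨M, hM⟩ := hbdd ρ hρ (t / 2) ht₂
  have hq : Integrable q := hint _ ht₂
  set u := (ball 0 ρ).indicator q
  set v := (ball 0 ρ)ᶜ.indicator q
  have hu : Integrable u := hq.indicator measurableSet_ball
  have hv : AEStronglyMeasurable v := hq.1.indicator measurableSet_ball.compl
  have hvM : ∀ᵐ y, ‖v y‖ ≤ max M 0 := .of_forall fun y => by
    rw [Real.norm_of_nonneg (indicator_nonneg (fun y _ => hnn _ ht₂ y) y)]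
    exact indicator_apply_le' (fun hy => (hM y (by simpa using hy)).trans (le_max_left _ _))
      fun _ => le_max_right _ _
  have hnear : ∀ᶠ x in 𝓝 x₀, 2 * ρ < ‖x‖ :=
    (continuous_norm.tendsto x₀).eventually (lt_mem_nhds (by linarith))
  have hsplit : q ⋆[mul ℝ ℝ] q =ᶠ[𝓝 x₀] q ⋆[mul ℝ ℝ] v + v ⋆[mul ℝ ℝ] u :=
    hnear.mono fun x hx => convolution_eq_add_indicator_of_two_mul_le_norm _ hx.le
      (convolutionExistsAt_of_integrable_of_bounded _ hq hv hvM x)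
      (convolutionExistsAt_of_bounded_of_integrable _ hv hvM hu x)
  have hcont : Continuous (q ⋆[mul ℝ ℝ] v + v ⋆[mul ℝ ℝ] u) :=
    (continuous_convolution_of_integrable_of_bounded _ hq hv hvM).add
      (continuous_convolution_of_bounded_of_integrable _ hv hvM hu)
  have hconv : (fun x => ∫ y, q (x - y) * q y) = q ⋆[mul ℝ ℝ] q :=
    funext fun x => convolution_mul_swap.symm
  rw [hconv]
  exact (hcont.continuousAt.congr hsplit.symm).continuousWithinAt

theorem convolution_square_continuous_away_from_origin
    {d : ℕ} (hd : 1 ≤ d)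
    (p : ℝ → EuclideanSpace ℝ (Fin d) → ℝ)
    (hnn : ∀ t > (0:ℝ), ∀ x, 0 ≤ p t x)
    (hint : ∀ t > (0:ℝ), Integrable (p t))
    (hprob : ∀ t > (0:ℝ), ∫ x, p t x = 1)
    (hsemi : ∀ t > (0:ℝ), ∀ s > (0:ℝ), ∀ x : EuclideanSpace ℝ (Fin d),
      ∫ y, p t (x - y) * p s y = p (t + s) x)
    (hrad : ∀ t > (0:ℝ), ∀ x y : EuclideanSpace ℝ (Fin d), ‖x‖ = ‖y‖ → p t x = p t y)
    (hmono : ∀ t > (0:ℝ), ∀ x y : EuclideanSpace ℝ (Fin d), ‖x‖ ≤ ‖y‖ → p t y ≤ p t x)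
    (hbdd : ∀ ρ > (0:ℝ), ∀ t > (0:ℝ), ∃ M : ℝ, ∀ y : EuclideanSpace ℝ (Fin d),
      ρ ≤ ‖y‖ → p t y ≤ M) :
    ∀ t > (0:ℝ), ContinuousOn
      (fun x : EuclideanSpace ℝ (Fin d) => ∫ y, p (t / 2) (x - y) * p (t / 2) y)
      {x | x ≠ 0} :=
  convolution_square_continuous_away_from_origin_general p hnn hint hbdd
end

section
/- Let $\nu:(0,\infty)\to(0,\infty)$ be nonincreasing and absolutely continuous with $\nu(r) = -\int_r^\infty \nu'(\rho)\,d\rho$, such that $-\nu'(r)/r$ is nonincreasing, and assume $\nu(r)\le a_1\nu(r+1)$ for $r\ge 1$ and $\nu(r)\le a_1\nu(2r)$ for $0<r\le 1$, where $a_1\ge 1$. Then for all $r>0$, $|\nu'(r)|/\nu(r) \le 3(a_1-1)/(r\wedge 1)$. -/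
open MeasureTheory Set

/-!
Write `f = -ν'`, so that `ν u - ν v = ∫_u^v f` and `f ρ / ρ` is antitone. On `[u, v]` this gives
`f ρ ≥ (f v / v) ρ`, hence `ν u - ν v ≥ f v (v² - u²) / (2 v)`. Taking `(u, v) = (r/2, r)` for
`r ≤ 2` and `(u, v) = (r - 1, r)` for `r > 2`, the doubling conditions bound the left side by
`(a₁ - 1) ν r`, and the factor `(v² - u²) / (2 v)` is at least `3 (r ∧ 1) / 8` in both cases.
The sign `f ≥ 0` comes from integrability: if `f r < 0`, then `f ≤ f r` on `(r, ∞)`.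
-/

lemma nonneg_of_antitoneOn_div_of_integrableOn_Ioi {f : ℝ → ℝ}
    (hf : AntitoneOn (fun ρ => f ρ / ρ) (Ioi 0)) {r : ℝ} (hr : 0 < r)
    (hint : IntegrableOn f (Ioi r)) : 0 ≤ f r := by
  by_contra! hneg
  have hle : ∀ ρ ∈ Ioi r, f ρ ≤ f r := fun ρ (hρ : r < ρ) => by
    have hρ0 : 0 < ρ := hr.trans hρ
    have hslope : f ρ / ρ ≤ f r / r := hf hr hρ0 hρ.le
    calc f ρ ≤ f r / r * ρ := (div_le_iff₀ hρ0).mp hslope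
      _ ≤ f r / r * r := mul_le_mul_of_nonpos_left hρ.le (div_neg_of_neg_of_pos hneg hr).le
      _ = f r := div_mul_cancel₀ _ hr.ne'
  have hconst : IntegrableOn (fun _ => f r) (Ioi r) := by
    refine Integrable.mono hint aestronglyMeasurable_const ?_
    filter_upwards [ae_restrict_mem measurableSet_Ioi] with ρ hρ
    rw [Real.norm_eq_abs, Real.norm_eq_abs, abs_of_neg hneg, abs_of_neg ((hle ρ hρ).trans_lt hneg)]
    exact neg_le_neg (hle ρ hρ)
  rcases (integrableOn_const_iff).mp hconst with hzero | hfin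
  · exact hneg.ne (enorm_eq_zero.mp hzero)
  · exact (Real.volume_Ioi ▸ hfin).false

lemma div_mul_sq_sub_sq_le_integral_of_antitoneOn_div {f : ℝ → ℝ}
    (hf : AntitoneOn (fun ρ => f ρ / ρ) (Ioi 0)) {u v : ℝ} (hu : 0 < u) (huv : u ≤ v)
    (hint : IntervalIntegrable f volume u v) :
    f v / v * ((v ^ 2 - u ^ 2) / 2) ≤ ∫ ρ in u..v, f ρ := by
  calc f v / v * ((v ^ 2 - u ^ 2) / 2) = ∫ ρ in u..v, f v / v * ρ := by
        rw [intervalIntegral.integral_const_mul, integral_id]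
    _ ≤ ∫ ρ in u..v, f ρ := by
        refine intervalIntegral.integral_mono_on huv
          (intervalIntegral.intervalIntegrable_id.const_mul _) hint fun ρ hρ => ?_
        have hρ0 : 0 < ρ := hu.trans_le hρ.1
        exact (le_div_iff₀ hρ0).mp (hf hρ0 (hu.trans_le huv) hρ.2)

lemma exists_doubling_point_with_large_gap {ν : ℝ → ℝ} {a₁ : ℝ}
    (hdbl1 : ∀ r : ℝ, 1 ≤ r → ν r ≤ a₁ * ν (r + 1))
    (hdbl2 : ∀ r : ℝ, 0 < r → r ≤ 1 → ν r ≤ a₁ * ν (2 * r)) {r : ℝ} (hr : 0 < r) :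
    ∃ u, 0 < u ∧ u ≤ r ∧ ν u ≤ a₁ * ν r ∧ 3 / 8 * min r 1 ≤ (r ^ 2 - u ^ 2) / (2 * r) := by
  rcases le_or_gt r 2 with hr2 | hr2
  · refine ⟨r / 2, by positivity, by linarith, ?_, ?_⟩
    · simpa only [mul_div_cancel₀ r two_ne_zero] using hdbl2 (r / 2) (by positivity) (by linarith)
    · rw [show (r ^ 2 - (r / 2) ^ 2) / (2 * r) = 3 / 8 * r by field_simp; ring]
      gcongr
      exact min_le_left r 1
  · refine ⟨r - 1, by linarith, by linarith, ?_, ?_⟩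
    · simpa only [sub_add_cancel] using hdbl1 (r - 1) (by linarith)
    · rw [le_div_iff₀ (by positivity)]
      nlinarith [min_le_right r 1]

theorem levy_density_log_derivative_bound_general
    (ν ν' : ℝ → ℝ) (a₁ : ℝ) (ha₁ : 1 ≤ a₁)
    (hpos : ∀ r > (0:ℝ), 0 < ν r)
    (habs : ∀ r > (0:ℝ), ν r = -∫ ρ in Set.Ioi r, ν' ρ)
    (hratio : ∀ u v : ℝ, 0 < u → u ≤ v → -ν' v / v ≤ -ν' u / u)
    (hdbl1 : ∀ r : ℝ, 1 ≤ r → ν r ≤ a₁ * ν (r + 1))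
    (hdbl2 : ∀ r : ℝ, 0 < r → r ≤ 1 → ν r ≤ a₁ * ν (2 * r)) :
    ∀ r > (0:ℝ), |ν' r| / ν r ≤ 3 * (a₁ - 1) / (min r 1) := by
  intro r hr
  have hf : AntitoneOn (fun ρ => -ν' ρ / ρ) (Ioi 0) := fun u hu v _ huv => hratio u v hu huv
  have hint : ∀ u > 0, IntegrableOn ν' (Ioi u) := fun u hu =>
    Integrable.of_integral_ne_zero fun h => (hpos u hu).ne' (by rw [habs u hu, h, neg_zero])
  have hderiv : 0 ≤ -ν' r := nonneg_of_antitoneOn_div_of_integrableOn_Ioi hf hr (hint r hr).neg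
  obtain ⟨u, hu, hur, hdbl, hfactor⟩ := exists_doubling_point_with_large_gap hdbl1 hdbl2 hr
  have hsub : ν u - ν r = ∫ ρ in u..r, -ν' ρ := by
    rw [habs u hu, habs r hr, intervalIntegral.integral_neg,
      ← intervalIntegral.integral_Ioi_sub_Ioi (hint u hu) hur, neg_sub_neg, neg_sub]
  have hdiff : -ν' r / r * ((r ^ 2 - u ^ 2) / 2) ≤ ν u - ν r :=
    hsub ▸ div_mul_sq_sub_sq_le_integral_of_antitoneOn_div hf hu hur
      ((intervalIntegrable_iff_integrableOn_Ioc_of_le hur).mpr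
        ((hint u hu).neg.mono_set Ioc_subset_Ioi_self))
  have hc : 0 ≤ (a₁ - 1) * ν r := mul_nonneg (sub_nonneg.mpr ha₁) (hpos r hr).le
  rw [abs_of_nonpos (neg_nonneg.mp hderiv), div_le_div_iff₀ (hpos r hr) (lt_min hr one_pos)]
  calc -ν' r * min r 1 = 8 / 3 * (-ν' r * (3 / 8 * min r 1)) := by ring
    _ ≤ 8 / 3 * (-ν' r * ((r ^ 2 - u ^ 2) / (2 * r))) := by gcongr
    _ = 8 / 3 * (-ν' r / r * ((r ^ 2 - u ^ 2) / 2)) := by ring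
    _ ≤ 8 / 3 * ((a₁ - 1) * ν r) := by gcongr 8 / 3 * ?_; linarith
    _ ≤ 3 * (a₁ - 1) * ν r := by linarith

theorem levy_density_log_derivative_bound
    (ν ν' : ℝ → ℝ) (a₁ : ℝ) (ha₁ : 1 ≤ a₁)
    (hpos : ∀ r > (0:ℝ), 0 < ν r)
    (hanti : ∀ u v : ℝ, 0 < u → u ≤ v → ν v ≤ ν u)
    (habs : ∀ r > (0:ℝ), ν r = -∫ ρ in Set.Ioi r, ν' ρ)
    (hratio : ∀ u v : ℝ, 0 < u → u ≤ v → -ν' v / v ≤ -ν' u / u)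
    (hdbl1 : ∀ r : ℝ, 1 ≤ r → ν r ≤ a₁ * ν (r + 1))
    (hdbl2 : ∀ r : ℝ, 0 < r → r ≤ 1 → ν r ≤ a₁ * ν (2 * r)) :
    ∀ r > (0:ℝ), |ν' r| / ν r ≤ 3 * (a₁ - 1) / (min r 1) :=
  levy_density_log_derivative_bound_general ν ν' a₁ ha₁ hpos habs hratio hdbl1 hdbl2
end

section
/- Under the same hypotheses on $\nu$ as above (conditions (H1) with constant $a_1$), for all $0 < r_1 < r_2 < \infty$ one has $\nu(r_1)/\nu(r_2) \le (r_2/r_1)^{3(a_1-1)} e^{3(a_1-1)(r_2-r_1)}$. -/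
/-!
Comparing `ν` at `s` with `ν` at `s / 2` (for `s ≤ 2`) or at `s - 1` (for `s > 2`), the doubling
conditions and the monotonicity of `-ν'(s) / s` bound the increment `ν(x) - ν(s) = ∫ₓˢ (-ν')`
from below by a multiple of `-ν'(s)`, which yields `-ν'(s) ≤ 3 (a₁ - 1) (1/s + 1) ν(s)`.
A backward Gronwall inequality with `Φ(s) = 3 (a₁ - 1) (log s + s)`, a primitive of that
coefficient, then gives `ν(r₁) ≤ ν(r₂) e^{Φ(r₂) - Φ(r₁)}`.
-/

open MeasureTheory Set Real

theorem continuousOn_of_eq_add_intervalIntegral {u g : ℝ → ℝ} {a b : ℝ}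
    (hg : IntegrableOn g (Icc a b)) (hu : ∀ x ∈ Icc a b, u x = u b + ∫ s in x..b, g s) :
    ContinuousOn u (Icc a b) := by
  rcases le_or_gt a b with hab | hba
  · rw [← uIcc_of_le hab] at hg ⊢
    refine (continuousOn_const.add ?_).congr (fun x hx => hu x (by rwa [← uIcc_of_le hab]))
    exact intervalIntegral.continuousOn_primitive_interval_left hg
  · simp [Icc_eq_empty_of_lt hba]

theorem le_mul_exp_sub_of_le_add_integral {u K Φ : ℝ → ℝ} {a b : ℝ} (hab : a ≤ b)
    (hu : ContinuousOn u (Icc a b)) (hK : ContinuousOn K (Icc a b))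
    (hK₀ : ∀ x ∈ Icc a b, 0 ≤ K x) (hΦ : ∀ x ∈ Icc a b, HasDerivAt Φ (K x) x)
    (hle : ∀ x ∈ Icc a b, u x ≤ u b + ∫ s in x..b, K s * u s) :
    u a ≤ u b * exp (Φ b - Φ a) := by
  set V : ℝ → ℝ := fun x => u b + ∫ s in x..b, K s * u s with hV_def
  have hKu : IntegrableOn (fun s => K s * u s) (uIcc a b) := by
    rw [uIcc_of_le hab]; exact (hK.mul hu).integrableOn_compact isCompact_Icc
  have hV : ContinuousOn V (Icc a b) := by
    rw [← uIcc_of_le hab]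
    exact continuousOn_const.add (intervalIntegral.continuousOn_primitive_interval_left hKu)
  -- `V e^Φ` is nondecreasing since its derivative is `K e^Φ (V - u) ≥ 0`.
  have hmono : MonotoneOn (fun x => V x * exp (Φ x)) (Icc a b) := by
    refine monotoneOn_of_hasDerivWithinAt_nonneg (f' := fun x => K x * exp (Φ x) * (V x - u x))
      (convex_Icc a b) (hV.mul (continuousOn_of_forall_continuousAt fun x hx =>
        (hΦ x hx).continuousAt.rexp)) (fun x hx => ?_) (fun x hx => ?_)
    · rw [interior_Icc] at hx
      have hcont : ContinuousAt (fun s => K s * u s) x :=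
        (hK.mul hu).continuousAt (Icc_mem_nhds hx.1 hx.2)
      have hVd : HasDerivAt V (-(K x * u x)) x :=
        (intervalIntegral.integral_hasDerivAt_left (hKu.intervalIntegrable.mono_set
          (uIcc_subset_uIcc (Icc_subset_uIcc (Ioo_subset_Icc_self hx)) right_mem_uIcc))
          (((hK.mul hu).mono Ioo_subset_Icc_self).stronglyMeasurableAtFilter isOpen_Ioo x hx)
          hcont).const_add _
      refine (hVd.mul (hΦ x (Ioo_subset_Icc_self hx)).exp).hasDerivWithinAt.congr_deriv ?_
      ring
    · rw [interior_Icc] at hx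
      exact mul_nonneg (mul_nonneg (hK₀ x (Ioo_subset_Icc_self hx)) (exp_pos _).le)
        (sub_nonneg.2 (hle x (Ioo_subset_Icc_self hx)))
  have := hmono ⟨le_rfl, hab⟩ ⟨hab, le_rfl⟩ hab
  simp only [hV_def, intervalIntegral.integral_same, add_zero] at this
  rw [sub_eq_add_neg, exp_add, exp_neg, ← mul_assoc, le_mul_inv_iff₀ (exp_pos _)]
  exact (mul_le_mul_of_nonneg_right (hle a ⟨le_rfl, hab⟩) (exp_pos _).le).trans this

theorem le_mul_exp_sub_of_eq_add_integral {u g K Φ : ℝ → ℝ} {a b : ℝ} (hab : a ≤ b)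
    (hg : IntegrableOn g (Icc a b)) (hu : ∀ x ∈ Icc a b, u x = u b + ∫ s in x..b, g s)
    (hK : ContinuousOn K (Icc a b)) (hK₀ : ∀ x ∈ Icc a b, 0 ≤ K x)
    (hΦ : ∀ x ∈ Icc a b, HasDerivAt Φ (K x) x) (hgK : ∀ x ∈ Icc a b, g x ≤ K x * u x) :
    u a ≤ u b * exp (Φ b - Φ a) := by
  have hucont := continuousOn_of_eq_add_intervalIntegral hg hu
  refine le_mul_exp_sub_of_le_add_integral hab hucont hK hK₀ hΦ fun x hx => ?_
  rw [hu x hx]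
  gcongr
  refine intervalIntegral.integral_mono_on hx.2 ?_ ?_ fun s hs => ?_
  · exact (intervalIntegrable_iff_integrableOn_Icc_of_le hx.2).2
      (hg.mono_set (Icc_subset_Icc_left hx.1))
  · exact ((hK.mul hucont).mono (Icc_subset_Icc_left hx.1)).intervalIntegrable_of_Icc hx.2
  · exact hgK s ⟨hx.1.trans hs.1, hs.2⟩

section
variable {ν ν' : ℝ → ℝ}

theorem sub_eq_intervalIntegral_neg_of_eq_neg_integral_Ioi
    (habs : ∀ r > (0:ℝ), ν r = -∫ ρ in Ioi r, ν' ρ) (hint : ∀ r > (0:ℝ), IntegrableOn ν' (Ioi r))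
    {x y : ℝ} (hx : 0 < x) (hxy : x ≤ y) : ν x - ν y = ∫ s in x..y, -ν' s := by
  rw [habs x hx, habs y (hx.trans_le hxy), intervalIntegral.integral_neg,
    ← intervalIntegral.integral_Ioi_sub_Ioi (hint x hx) hxy]
  ring

theorem neg_nonneg_of_eq_neg_integral_Ioi (hpos : ∀ r > (0:ℝ), 0 < ν r)
    (habs : ∀ r > (0:ℝ), ν r = -∫ ρ in Ioi r, ν' ρ)
    (hratio : ∀ u v : ℝ, 0 < u → u ≤ v → -ν' v / v ≤ -ν' u / u) {s : ℝ} (hs : 0 < s) :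
    0 ≤ -ν' s := by
  by_contra! hneg
  have htail : ∫ ρ in Ioi s, -ν' ρ ≤ 0 := setIntegral_nonpos measurableSet_Ioi fun ρ hρ => by
    have hρ₀ : 0 < ρ := hs.trans hρ
    have := (hratio s ρ hs (le_of_lt hρ)).trans_lt (div_neg_of_neg_of_pos hneg hs)
    linarith [(div_lt_iff₀ hρ₀).1 this]
  have hνs := hpos s hs
  rw [habs s hs, ← integral_neg] at hνs
  linarith

theorem neg_mul_sq_sub_sq_le_sub (habs : ∀ r > (0:ℝ), ν r = -∫ ρ in Ioi r, ν' ρ)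
    (hint : ∀ r > (0:ℝ), IntegrableOn ν' (Ioi r))
    (hratio : ∀ u v : ℝ, 0 < u → u ≤ v → -ν' v / v ≤ -ν' u / u) {x y : ℝ} (hx : 0 < x)
    (hxy : x ≤ y) : -ν' y / y * ((y ^ 2 - x ^ 2) / 2) ≤ ν x - ν y := by
  rw [sub_eq_intervalIntegral_neg_of_eq_neg_integral_Ioi habs hint hx hxy, ← integral_id,
    ← intervalIntegral.integral_const_mul]
  refine intervalIntegral.integral_mono_on hxy
    ((continuous_const.mul continuous_id).intervalIntegrable _ _)
    ((intervalIntegrable_iff_integrableOn_Ioc_of_le hxy).2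
      ((hint x hx).mono_set Ioc_subset_Ioi_self).neg) fun ρ hρ => ?_
  exact (le_div_iff₀ (hx.trans_le hρ.1)).1 (hratio ρ y (hx.trans_le hρ.1) hρ.2)
end

theorem neg_le_mul_of_doubling {ν ν' : ℝ → ℝ} {a₁ s : ℝ} (ha₁ : 1 ≤ a₁) (hs : 0 < s)
    (hνs : 0 < ν s) (hν's : 0 ≤ -ν' s)
    (hdbl1 : ∀ r : ℝ, 1 ≤ r → ν r ≤ a₁ * ν (r + 1))
    (hdbl2 : ∀ r : ℝ, 0 < r → r ≤ 1 → ν r ≤ a₁ * ν (2 * r))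
    (hlin : ∀ x, 0 < x → x ≤ s → -ν' s / s * ((s ^ 2 - x ^ 2) / 2) ≤ ν x - ν s) :
    -ν' s ≤ 3 * (a₁ - 1) * (s⁻¹ + 1) * ν s := by
  have hD : 0 ≤ (a₁ - 1) * ν s := mul_nonneg (by linarith) hνs.le
  have hrhs : 3 * (a₁ - 1) * (s⁻¹ + 1) * ν s = 3 * ((a₁ - 1) * ν s) * (1 + s) / s := by
    field_simp
  rw [hrhs, le_div_iff₀ hs]
  rcases le_or_gt s 2 with hs2 | hs2
  · have hdb := hdbl2 (s / 2) (by positivity) (by linarith)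
    rw [mul_div_cancel₀ s two_ne_zero] at hdb
    have key := hlin (s / 2) (by positivity) (by linarith)
    have heq : -ν' s / s * ((s ^ 2 - (s / 2) ^ 2) / 2) = 3 / 8 * (-ν' s * s) := by
      field_simp; ring
    nlinarith
  · have hdb := hdbl1 (s - 1) (by linarith)
    rw [sub_add_cancel] at hdb
    have key := hlin (s - 1) (by linarith) (by linarith)
    have heq : -ν' s / s * ((s ^ 2 - (s - 1) ^ 2) / 2) = -ν' s * (s - 1 / 2) / s := by
      field_simp; ring
    rw [heq, div_le_iff₀ hs] at key
    nlinarith [mul_nonneg hν's (show (0:ℝ) ≤ s / 4 - 1 / 2 by linarith)]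

theorem levy_density_ratio_bound_general
    (ν ν' : ℝ → ℝ) (a₁ : ℝ) (ha₁ : 1 ≤ a₁)
    (hpos : ∀ r > (0:ℝ), 0 < ν r)
    (habs : ∀ r > (0:ℝ), ν r = -∫ ρ in Set.Ioi r, ν' ρ)
    (hratio : ∀ u v : ℝ, 0 < u → u ≤ v → -ν' v / v ≤ -ν' u / u)
    (hdbl1 : ∀ r : ℝ, 1 ≤ r → ν r ≤ a₁ * ν (r + 1))
    (hdbl2 : ∀ r : ℝ, 0 < r → r ≤ 1 → ν r ≤ a₁ * ν (2 * r)) :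
    ∀ r₁ r₂ : ℝ, 0 < r₁ → r₁ < r₂ →
      ν r₁ / ν r₂ ≤ (r₂ / r₁) ^ (3 * (a₁ - 1)) * Real.exp (3 * (a₁ - 1) * (r₂ - r₁)) := by
  intro r₁ r₂ hr₁ hr₁₂
  have hint : ∀ r > (0:ℝ), IntegrableOn ν' (Ioi r) := fun r hr =>
    Integrable.of_integral_ne_zero fun h => by linarith [hpos r hr, habs r hr]
  have hpos' : ∀ x ∈ Icc r₁ r₂, 0 < x := fun x hx => hr₁.trans_le hx.1
  have hlog : ∀ x ∈ Icc r₁ r₂,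
      HasDerivAt (fun s => 3 * (a₁ - 1) * (log s + s)) (3 * (a₁ - 1) * (x⁻¹ + 1)) x :=
    fun x hx => ((hasDerivAt_log (hpos' x hx).ne').add (hasDerivAt_id x)).const_mul _
  have hrep : ∀ x ∈ Icc r₁ r₂, ν x = ν r₂ + ∫ s in x..r₂, -ν' s := fun x hx => by
    rw [← sub_eq_intervalIntegral_neg_of_eq_neg_integral_Ioi habs hint (hpos' x hx) hx.2]
    ring
  have hint_Icc : IntegrableOn (fun s => -ν' s) (Icc r₁ r₂) :=
    ((hint (r₁ / 2) (by positivity)).mono_set fun x hx => by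
      simp only [mem_Ioi]; linarith [hx.1]).neg
  have hK : ContinuousOn (fun s => 3 * (a₁ - 1) * (s⁻¹ + 1)) (Icc r₁ r₂) :=
    continuousOn_const.mul ((continuousOn_inv₀.mono fun x hx => (hpos' x hx).ne').add
      continuousOn_const)
  have hbound : ∀ s ∈ Icc r₁ r₂, -ν' s ≤ 3 * (a₁ - 1) * (s⁻¹ + 1) * ν s := fun s hs =>
    neg_le_mul_of_doubling ha₁ (hpos' s hs) (hpos s (hpos' s hs))
      (neg_nonneg_of_eq_neg_integral_Ioi hpos habs hratio (hpos' s hs)) hdbl1 hdbl2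
      fun x hx hxs => neg_mul_sq_sub_sq_le_sub habs hint hratio hx hxs
  have hgron := le_mul_exp_sub_of_eq_add_integral hr₁₂.le hint_Icc hrep hK
    (fun x hx => by have := hpos' x hx; positivity) hlog hbound
  rw [div_le_iff₀ (hpos r₂ (hr₁.trans hr₁₂)), rpow_def_of_pos (div_pos (hr₁.trans hr₁₂) hr₁),
    ← exp_add, log_div (hr₁.trans hr₁₂).ne' hr₁.ne', mul_comm]
  refine hgron.trans_eq ?_
  congr 2
  ring

theorem levy_density_ratio_bound
    (ν ν' : ℝ → ℝ) (a₁ : ℝ) (ha₁ : 1 ≤ a₁)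
    (hpos : ∀ r > (0:ℝ), 0 < ν r)
    (hanti : ∀ u v : ℝ, 0 < u → u ≤ v → ν v ≤ ν u)
    (habs : ∀ r > (0:ℝ), ν r = -∫ ρ in Set.Ioi r, ν' ρ)
    (hratio : ∀ u v : ℝ, 0 < u → u ≤ v → -ν' v / v ≤ -ν' u / u)
    (hdbl1 : ∀ r : ℝ, 1 ≤ r → ν r ≤ a₁ * ν (r + 1))
    (hdbl2 : ∀ r : ℝ, 0 < r → r ≤ 1 → ν r ≤ a₁ * ν (2 * r)) :
    ∀ r₁ r₂ : ℝ, 0 < r₁ → r₁ < r₂ →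
      ν r₁ / ν r₂ ≤ (r₂ / r₁) ^ (3 * (a₁ - 1)) * Real.exp (3 * (a₁ - 1) * (r₂ - r₁)) :=
  levy_density_ratio_bound_general ν ν' a₁ ha₁ hpos habs hratio hdbl1 hdbl2
end

section
/- Under the same hypotheses on $\nu$ (conditions (H1) with constant $a_1$), for all $0<r_1<r_2<\infty$ one has $\nu(r_1)-\nu(r_2) \le \frac{3}{2}(a_1-1)\,\frac{\nu(r_1)}{1\wedge r_1}\,(r_2-r_1)\left(1+\frac{r_2}{r_1}\right)$. -/
/-!
Write `ν a - ν b = ∫ₐᵇ (-ν')` and compare `-ν'(ρ)` with `g(ρ) ρ`, where `g = -ν'/ρ` is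
nonincreasing: this gives `g(b) (b² - a²)/2 ≤ ν a - ν b ≤ g(a) (b² - a²)/2`. The right-hand
inequality at `(r₁, r₂)` reduces the claim to the pointwise bound
`-ν'(u) ≤ 3 (a₁ - 1) ν(u) / (1 ∧ u)`.
That bound is the left-hand inequality on `[u/2, u]` (for `u ≤ 2`) or on `[u - 1, u]`
(for `u ≥ 2`), where the doubling conditions give `ν a - ν u ≤ (a₁ - 1) ν u`.
-/

open MeasureTheory Set

theorem integral_mul_id (c a b : ℝ) : ∫ x in a..b, c * x = c * (b ^ 2 - a ^ 2) / 2 := by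
  rw [intervalIntegral.integral_const_mul, integral_id]
  ring

theorem integral_le_of_le_const_mul_id {f : ℝ → ℝ} {a b c : ℝ} (hab : a ≤ b)
    (hf : IntervalIntegrable f volume a b) (h : ∀ x ∈ Icc a b, f x ≤ c * x) :
    ∫ x in a..b, f x ≤ c * (b ^ 2 - a ^ 2) / 2 := by
  rw [← integral_mul_id]
  exact intervalIntegral.integral_mono_on hab hf
    ((continuous_const_mul c).intervalIntegrable _ _) h

theorem const_mul_id_le_integral {f : ℝ → ℝ} {a b c : ℝ} (hab : a ≤ b)
    (hf : IntervalIntegrable f volume a b) (h : ∀ x ∈ Icc a b, c * x ≤ f x) :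
    c * (b ^ 2 - a ^ 2) / 2 ≤ ∫ x in a..b, f x := by
  rw [← integral_mul_id]
  exact intervalIntegral.integral_mono_on hab
    ((continuous_const_mul c).intervalIntegrable _ _) hf h

section TailIntegral

variable {ν ν' : ℝ → ℝ}

theorem integrableOn_Ioi_of_tail_pos (hpos : ∀ r > (0:ℝ), 0 < ν r)
    (habs : ∀ r > (0:ℝ), ν r = -∫ ρ in Ioi r, ν' ρ) {r : ℝ} (hr : 0 < r) :
    IntegrableOn ν' (Ioi r) :=
  .of_integral_ne_zero fun h ↦ (hpos r hr).ne' (by rw [habs r hr, h, neg_zero])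

theorem sub_eq_integral_neg_of_tail (hpos : ∀ r > (0:ℝ), 0 < ν r)
    (habs : ∀ r > (0:ℝ), ν r = -∫ ρ in Ioi r, ν' ρ) {a b : ℝ} (ha : 0 < a) (hab : a ≤ b) :
    ν a - ν b = ∫ x in a..b, -ν' x := by
  rw [habs a ha, habs b (ha.trans_le hab), intervalIntegral.integral_neg,
    ← intervalIntegral.integral_Ioi_sub_Ioi (integrableOn_Ioi_of_tail_pos hpos habs ha) hab]
  ring

theorem intervalIntegrable_neg_of_tail (hpos : ∀ r > (0:ℝ), 0 < ν r)
    (habs : ∀ r > (0:ℝ), ν r = -∫ ρ in Ioi r, ν' ρ) {a b : ℝ} (ha : 0 < a) (hab : a ≤ b) :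
    IntervalIntegrable (fun x ↦ -ν' x) volume a b :=
  ((intervalIntegrable_iff_integrableOn_Ioc_of_le hab).2
    ((integrableOn_Ioi_of_tail_pos hpos habs ha).mono_set Ioc_subset_Ioi_self)).neg

theorem sub_le_of_antitone_ratio (hpos : ∀ r > (0:ℝ), 0 < ν r)
    (habs : ∀ r > (0:ℝ), ν r = -∫ ρ in Ioi r, ν' ρ)
    (hratio : ∀ u v : ℝ, 0 < u → u ≤ v → -ν' v / v ≤ -ν' u / u) {a b : ℝ} (ha : 0 < a)
    (hab : a ≤ b) : ν a - ν b ≤ -ν' a / a * (b ^ 2 - a ^ 2) / 2 := by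
  rw [sub_eq_integral_neg_of_tail hpos habs ha hab]
  refine integral_le_of_le_const_mul_id hab (intervalIntegrable_neg_of_tail hpos habs ha hab)
    fun x hx ↦ ?_
  have hx0 : 0 < x := ha.trans_le hx.1
  calc -ν' x = -ν' x / x * x := (div_mul_cancel₀ _ hx0.ne').symm
    _ ≤ -ν' a / a * x := mul_le_mul_of_nonneg_right (hratio a x ha hx.1) hx0.le

theorem le_sub_of_antitone_ratio (hpos : ∀ r > (0:ℝ), 0 < ν r)
    (habs : ∀ r > (0:ℝ), ν r = -∫ ρ in Ioi r, ν' ρ)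
    (hratio : ∀ u v : ℝ, 0 < u → u ≤ v → -ν' v / v ≤ -ν' u / u) {a b : ℝ} (ha : 0 < a)
    (hab : a ≤ b) : -ν' b / b * (b ^ 2 - a ^ 2) / 2 ≤ ν a - ν b := by
  rw [sub_eq_integral_neg_of_tail hpos habs ha hab]
  refine const_mul_id_le_integral hab (intervalIntegrable_neg_of_tail hpos habs ha hab)
    fun x hx ↦ ?_
  have hx0 : 0 < x := ha.trans_le hx.1
  calc -ν' b / b * x ≤ -ν' x / x * x :=
        mul_le_mul_of_nonneg_right (hratio x b hx0 hx.2) hx0.le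
    _ = -ν' x := div_mul_cancel₀ _ hx0.ne'

theorem neg_deriv_le_of_sub_le (hpos : ∀ r > (0:ℝ), 0 < ν r)
    (habs : ∀ r > (0:ℝ), ν r = -∫ ρ in Ioi r, ν' ρ)
    (hratio : ∀ u v : ℝ, 0 < u → u ≤ v → -ν' v / v ≤ -ν' u / u) {a u K : ℝ} (ha : 0 < a)
    (hau : a < u) (hK : ν a - ν u ≤ K) : -ν' u ≤ 2 * u / (u ^ 2 - a ^ 2) * K := by
  have hu : 0 < u := ha.trans hau
  have hsq : 0 < u ^ 2 - a ^ 2 := by nlinarith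
  have h := (le_sub_of_antitone_ratio hpos habs hratio ha hau.le).trans hK
  rw [div_mul_eq_mul_div, le_div_iff₀ hsq]
  calc -ν' u * (u ^ 2 - a ^ 2) = 2 * u * (-ν' u / u * (u ^ 2 - a ^ 2) / 2) := by
        field_simp
    _ ≤ 2 * u * K := by gcongr

theorem neg_deriv_le_of_doubling (hpos : ∀ r > (0:ℝ), 0 < ν r)
    (habs : ∀ r > (0:ℝ), ν r = -∫ ρ in Ioi r, ν' ρ)
    (hratio : ∀ u v : ℝ, 0 < u → u ≤ v → -ν' v / v ≤ -ν' u / u) {a₁ : ℝ} (ha₁ : 1 ≤ a₁)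
    (hdbl1 : ∀ r : ℝ, 1 ≤ r → ν r ≤ a₁ * ν (r + 1))
    (hdbl2 : ∀ r : ℝ, 0 < r → r ≤ 1 → ν r ≤ a₁ * ν (2 * r)) {u : ℝ} (hu : 0 < u) :
    -ν' u ≤ 3 / min 1 u * ((a₁ - 1) * ν u) := by
  have hK : 0 ≤ (a₁ - 1) * ν u := mul_nonneg (by linarith) (hpos u hu).le
  rcases le_total u 2 with hu2 | hu2
  · have hdbl : ν (u / 2) - ν u ≤ (a₁ - 1) * ν u := by
      have := hdbl2 (u / 2) (by positivity) (by linarith)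
      rw [mul_div_cancel₀ u two_ne_zero] at this
      linarith
    refine (neg_deriv_le_of_sub_le hpos habs hratio (by positivity) (by linarith) hdbl).trans
      (mul_le_mul_of_nonneg_right ?_ hK)
    calc 2 * u / (u ^ 2 - (u / 2) ^ 2) = 8 / 3 / u := by field_simp; ring
      _ ≤ 3 / u := by gcongr; norm_num
      _ ≤ 3 / min 1 u :=
        div_le_div_of_nonneg_left (by norm_num) (lt_min one_pos hu) (min_le_right 1 u)
  · have hdbl : ν (u - 1) - ν u ≤ (a₁ - 1) * ν u := by
      have := hdbl1 (u - 1) (by linarith)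
      rw [sub_add_cancel] at this
      linarith
    refine (neg_deriv_le_of_sub_le hpos habs hratio (by linarith) (by linarith) hdbl).trans
      (mul_le_mul_of_nonneg_right ?_ hK)
    rw [min_eq_left (by linarith), show u ^ 2 - (u - 1) ^ 2 = 2 * u - 1 by ring,
      div_le_iff₀ (by linarith)]
    linarith

end TailIntegral

theorem levy_density_difference_bound_general
    (ν ν' : ℝ → ℝ) (a₁ : ℝ) (ha₁ : 1 ≤ a₁)
    (hpos : ∀ r > (0:ℝ), 0 < ν r)
    (habs : ∀ r > (0:ℝ), ν r = -∫ ρ in Set.Ioi r, ν' ρ)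
    (hratio : ∀ u v : ℝ, 0 < u → u ≤ v → -ν' v / v ≤ -ν' u / u)
    (hdbl1 : ∀ r : ℝ, 1 ≤ r → ν r ≤ a₁ * ν (r + 1))
    (hdbl2 : ∀ r : ℝ, 0 < r → r ≤ 1 → ν r ≤ a₁ * ν (2 * r)) :
    ∀ r₁ r₂ : ℝ, 0 < r₁ → r₁ < r₂ →
      ν r₁ - ν r₂ ≤ (3 / 2) * (a₁ - 1) * (ν r₁ / min 1 r₁) * (r₂ - r₁) * (1 + r₂ / r₁) := by
  intro r₁ r₂ hr₁ hr₁₂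
  have hsq : 0 ≤ r₂ ^ 2 - r₁ ^ 2 := sub_nonneg.2 (pow_le_pow_left₀ hr₁.le hr₁₂.le 2)
  calc ν r₁ - ν r₂ ≤ -ν' r₁ / r₁ * (r₂ ^ 2 - r₁ ^ 2) / 2 :=
        sub_le_of_antitone_ratio hpos habs hratio hr₁ hr₁₂.le
    _ ≤ 3 / min 1 r₁ * ((a₁ - 1) * ν r₁) / r₁ * (r₂ ^ 2 - r₁ ^ 2) / 2 := by
        gcongr
        exact neg_deriv_le_of_doubling hpos habs hratio ha₁ hdbl1 hdbl2 hr₁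
    _ = (3 / 2) * (a₁ - 1) * (ν r₁ / min 1 r₁) * (r₂ - r₁) * (1 + r₂ / r₁) := by
        field_simp
        ring

theorem levy_density_difference_bound
    (ν ν' : ℝ → ℝ) (a₁ : ℝ) (ha₁ : 1 ≤ a₁)
    (hpos : ∀ r > (0:ℝ), 0 < ν r)
    (hanti : ∀ u v : ℝ, 0 < u → u ≤ v → ν v ≤ ν u)
    (habs : ∀ r > (0:ℝ), ν r = -∫ ρ in Set.Ioi r, ν' ρ)
    (hratio : ∀ u v : ℝ, 0 < u → u ≤ v → -ν' v / v ≤ -ν' u / u)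
    (hdbl1 : ∀ r : ℝ, 1 ≤ r → ν r ≤ a₁ * ν (r + 1))
    (hdbl2 : ∀ r : ℝ, 0 < r → r ≤ 1 → ν r ≤ a₁ * ν (2 * r)) :
    ∀ r₁ r₂ : ℝ, 0 < r₁ → r₁ < r₂ →
      ν r₁ - ν r₂ ≤ (3 / 2) * (a₁ - 1) * (ν r₁ / min 1 r₁) * (r₂ - r₁) * (1 + r₂ / r₁) :=
  levy_density_difference_bound_general ν ν' a₁ ha₁ hpos habs hratio hdbl1 hdbl2
end

section
/- Let $\nu:(0,\infty)\to(0,\infty)$ satisfy conditions (H1) with constant $a_1$ (nonincreasing, absolutely continuous, $-\nu'(r)/r$ nonincreasing, $\nu(r)\le a_1\nu(r+1)$ for $r\ge1$, $\nu(r)\le a_1\nu(2r)$ for $0<r\le1$). For $x\in\mathbb{R}^d$ write $\hat x = (-x_1,x_2,\dots,x_d)$. Then for all $v,z\in\mathbb{R}^d$ with $v_1>0$, $z_1>0$: $\nu(|v-z|) - \nu(|v-\hat z|) \le \frac{3}{2}(a_1-1)\,|z-\hat z|\,\frac{\nu(|v-z|)}{1\wedge |v-z|}\left(1 + \frac{|v-\hat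 z|}{|v-z|}\right)$. -/
open MeasureTheory Set

/-- Reflection in the first coordinate: `x̂ = (-x₁, x₂, …, x_d)`. -/
noncomputable def reflFirst {d : ℕ} (x : EuclideanSpace ℝ (Fin d)) :
    EuclideanSpace ℝ (Fin d) :=
  WithLp.toLp 2 (fun i : Fin d => if (i : ℕ) = 0 then -x i else x i)

/-!
Write `q r = -ν' r / r`. Since `ν a - ν b = ∫ ρ in a..b, -ν' ρ` and `q` is antitone, this
integral lies between `q b * (b² - a²) / 2` and `q a * (b² - a²) / 2`. The lower bound on
`[r / 2, r]` (for `r ≤ 2`) or on `[r - 1, r]` (for `r > 2`), combined with the doubling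
conditions, gives `q r ≤ 3 (a₁ - 1) ν r / (min 1 r * r)`. The upper bound on
`[‖v - z‖, ‖v - ẑ‖]` then yields the estimate, because
`‖v - z‖ ≤ ‖v - ẑ‖ ≤ ‖v - z‖ + ‖z - ẑ‖` when `v₁, z₁ > 0`.
-/

section AntitoneDiv

variable {f : ℝ → ℝ} {a b : ℝ}

theorem intervalIntegral_le_of_antitoneOn_div (hf : AntitoneOn (fun ρ => f ρ / ρ) (Ioi 0))
    (ha : 0 < a) (hab : a ≤ b) (hint : IntervalIntegrable f volume a b) :
    ∫ ρ in a..b, f ρ ≤ f a / a * ((b ^ 2 - a ^ 2) / 2) := by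
  calc ∫ ρ in a..b, f ρ ≤ ∫ ρ in a..b, f a / a * ρ := by
        refine intervalIntegral.integral_mono_on hab hint
          ((continuous_const.mul continuous_id).intervalIntegrable _ _) fun ρ hρ => ?_
        have hρ0 : 0 < ρ := ha.trans_le hρ.1
        calc f ρ = f ρ / ρ * ρ := by field_simp
          _ ≤ f a / a * ρ := mul_le_mul_of_nonneg_right (hf ha hρ0 hρ.1) hρ0.le
    _ = f a / a * ((b ^ 2 - a ^ 2) / 2) := by
        rw [intervalIntegral.integral_const_mul, integral_id]

theorem div_mul_le_intervalIntegral_of_antitoneOn_div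
    (hf : AntitoneOn (fun ρ => f ρ / ρ) (Ioi 0))
    (ha : 0 < a) (hab : a ≤ b) (hint : IntervalIntegrable f volume a b) :
    f b / b * ((b ^ 2 - a ^ 2) / 2) ≤ ∫ ρ in a..b, f ρ := by
  calc f b / b * ((b ^ 2 - a ^ 2) / 2) = ∫ ρ in a..b, f b / b * ρ := by
        rw [intervalIntegral.integral_const_mul, integral_id]
    _ ≤ ∫ ρ in a..b, f ρ := by
        refine intervalIntegral.integral_mono_on hab
          ((continuous_const.mul continuous_id).intervalIntegrable _ _) hint fun ρ hρ => ?_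
        have hρ0 : 0 < ρ := ha.trans_le hρ.1
        calc f b / b * ρ ≤ f ρ / ρ * ρ :=
              mul_le_mul_of_nonneg_right (hf hρ0 (ha.trans_le hab) hρ.2) hρ0.le
          _ = f ρ := by field_simp

end AntitoneDiv

section LevyDensity

variable {ν ν' : ℝ → ℝ} {a₁ a b r : ℝ}

theorem integrableOn_Ioi_of_eq_neg_integral (hν : ν r ≠ 0)
    (habs : ν r = -∫ ρ in Ioi r, ν' ρ) : IntegrableOn ν' (Ioi r) := by
  by_contra h
  rw [integral_undef h, neg_zero] at habs
  exact hν habs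

theorem sub_eq_intervalIntegral_neg (hpos : ∀ r > (0 : ℝ), 0 < ν r)
    (habs : ∀ r > (0 : ℝ), ν r = -∫ ρ in Ioi r, ν' ρ) (ha : 0 < a) (hab : a ≤ b) :
    ν a - ν b = ∫ ρ in a..b, -ν' ρ := by
  have hint := integrableOn_Ioi_of_eq_neg_integral (hpos a ha).ne' (habs a ha)
  rw [intervalIntegral.integral_neg, ← intervalIntegral.integral_Ioi_sub_Ioi hint hab,
    habs a ha, habs b (ha.trans_le hab)]
  ring

theorem intervalIntegrable_of_eq_neg_integral (hpos : ∀ r > (0 : ℝ), 0 < ν r)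
    (habs : ∀ r > (0 : ℝ), ν r = -∫ ρ in Ioi r, ν' ρ) (ha : 0 < a) (hab : a ≤ b) :
    IntervalIntegrable (fun ρ => -ν' ρ) volume a b :=
  ((intervalIntegrable_iff_integrableOn_Ioc_of_le hab).2 <|
    (integrableOn_Ioi_of_eq_neg_integral (hpos a ha).ne' (habs a ha)).mono_set
      Ioc_subset_Ioi_self).neg

theorem neg_deriv_div_mul_le_sub (hpos : ∀ r > (0 : ℝ), 0 < ν r)
    (habs : ∀ r > (0 : ℝ), ν r = -∫ ρ in Ioi r, ν' ρ)
    (hratio : AntitoneOn (fun ρ => -ν' ρ / ρ) (Ioi 0)) (ha : 0 < a) (hab : a ≤ b) :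
    -ν' b / b * ((b ^ 2 - a ^ 2) / 2) ≤ ν a - ν b := by
  rw [sub_eq_intervalIntegral_neg hpos habs ha hab]
  exact div_mul_le_intervalIntegral_of_antitoneOn_div hratio ha hab
    (intervalIntegrable_of_eq_neg_integral hpos habs ha hab)

theorem sub_le_neg_deriv_div_mul (hpos : ∀ r > (0 : ℝ), 0 < ν r)
    (habs : ∀ r > (0 : ℝ), ν r = -∫ ρ in Ioi r, ν' ρ)
    (hratio : AntitoneOn (fun ρ => -ν' ρ / ρ) (Ioi 0)) (ha : 0 < a) (hab : a ≤ b) :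
    ν a - ν b ≤ -ν' a / a * ((b ^ 2 - a ^ 2) / 2) := by
  rw [sub_eq_intervalIntegral_neg hpos habs ha hab]
  exact intervalIntegral_le_of_antitoneOn_div hratio ha hab
    (intervalIntegrable_of_eq_neg_integral hpos habs ha hab)

theorem neg_deriv_div_le (ha₁ : 1 ≤ a₁) (hpos : ∀ r > (0 : ℝ), 0 < ν r)
    (habs : ∀ r > (0 : ℝ), ν r = -∫ ρ in Ioi r, ν' ρ)
    (hratio : AntitoneOn (fun ρ => -ν' ρ / ρ) (Ioi 0))
    (hdbl1 : ∀ r : ℝ, 1 ≤ r → ν r ≤ a₁ * ν (r + 1))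
    (hdbl2 : ∀ r : ℝ, 0 < r → r ≤ 1 → ν r ≤ a₁ * ν (2 * r)) (hr : 0 < r) :
    -ν' r / r ≤ 3 * (a₁ - 1) * ν r / (min 1 r * r) := by
  have hslack : 0 ≤ (a₁ - 1) * ν r := mul_nonneg (by linarith) (hpos r hr).le
  rw [le_div_iff₀ (mul_pos (lt_min one_pos hr) hr)]
  rcases le_or_gt r 2 with hr2 | hr2
  · have hdrop := neg_deriv_div_mul_le_sub (a := r / 2) (b := r) hpos habs hratio
      (by linarith) (by linarith)
    have hdbl := hdbl2 (r / 2) (by linarith) (by linarith)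
    rw [mul_div_cancel₀ r two_ne_zero] at hdbl
    have hmin : min 1 r * r ≤ r ^ 2 := by nlinarith [min_le_right 1 r]
    rcases le_or_gt (-ν' r / r) 0 with hq | hq
    · nlinarith [mul_pos (lt_min one_pos hr) hr]
    · nlinarith [mul_le_mul_of_nonneg_left hmin hq.le]
  · have hdrop := neg_deriv_div_mul_le_sub (a := r - 1) (b := r) hpos habs hratio
      (by linarith) (by linarith)
    have hdbl := hdbl1 (r - 1) (by linarith)
    rw [sub_add_cancel] at hdbl
    rw [min_eq_left (by linarith), one_mul]
    rcases le_or_gt (-ν' r / r) 0 with hq | hq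
    · nlinarith
    · nlinarith [mul_pos hq (show (0 : ℝ) < 2 * r - 3 / 2 by linarith)]

theorem sub_le_three_halves_mul_sub (ha₁ : 1 ≤ a₁) (hpos : ∀ r > (0 : ℝ), 0 < ν r)
    (habs : ∀ r > (0 : ℝ), ν r = -∫ ρ in Ioi r, ν' ρ)
    (hratio : AntitoneOn (fun ρ => -ν' ρ / ρ) (Ioi 0))
    (hdbl1 : ∀ r : ℝ, 1 ≤ r → ν r ≤ a₁ * ν (r + 1))
    (hdbl2 : ∀ r : ℝ, 0 < r → r ≤ 1 → ν r ≤ a₁ * ν (2 * r))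
    (ha : 0 < a) (hab : a ≤ b) :
    ν a - ν b ≤ 3 / 2 * (a₁ - 1) * (b - a) * (ν a / min 1 a) * (1 + b / a) := by
  calc ν a - ν b ≤ -ν' a / a * ((b ^ 2 - a ^ 2) / 2) :=
        sub_le_neg_deriv_div_mul hpos habs hratio ha hab
    _ ≤ 3 * (a₁ - 1) * ν a / (min 1 a * a) * ((b ^ 2 - a ^ 2) / 2) :=
        mul_le_mul_of_nonneg_right (neg_deriv_div_le ha₁ hpos habs hratio hdbl1 hdbl2 ha)
          (by nlinarith)
    _ = 3 / 2 * (a₁ - 1) * (b - a) * (ν a / min 1 a) * (1 + b / a) := by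
        field_simp
        ring

end LevyDensity

theorem EuclideanSpace.norm_le_norm_of_abs_le {n : Type*} [Fintype n]
    {x y : EuclideanSpace ℝ n} (h : ∀ i, |x i| ≤ |y i|) : ‖x‖ ≤ ‖y‖ := by
  rw [EuclideanSpace.norm_eq, EuclideanSpace.norm_eq]
  gcongr with i
  simpa only [Real.norm_eq_abs] using h i

theorem norm_sub_le_norm_sub_reflFirst {d : ℕ} (hd : 0 < d) {v z : EuclideanSpace ℝ (Fin d)}
    (hv : 0 < v ⟨0, hd⟩) (hz : 0 < z ⟨0, hd⟩) : ‖v - z‖ ≤ ‖v - reflFirst z‖ := by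
  refine EuclideanSpace.norm_le_norm_of_abs_le fun i => ?_
  by_cases hi : (i : ℕ) = 0
  · obtain rfl : i = ⟨0, hd⟩ := Fin.ext hi
    simp only [PiLp.sub_apply, reflFirst, if_true, sub_neg_eq_add]
    rw [abs_of_pos (by linarith : 0 < v ⟨0, hd⟩ + z ⟨0, hd⟩), abs_sub_le_iff]
    constructor <;> linarith
  · simp [reflFirst, hi]

theorem difference_levy_density_bound_general
    {d : ℕ} (hd : 0 < d)
    (ν ν' : ℝ → ℝ) (a₁ : ℝ) (ha₁ : 1 ≤ a₁)
    (hpos : ∀ r > (0:ℝ), 0 < ν r)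
    (habs : ∀ r > (0:ℝ), ν r = -∫ ρ in Set.Ioi r, ν' ρ)
    (hratio : ∀ u v : ℝ, 0 < u → u ≤ v → -ν' v / v ≤ -ν' u / u)
    (hdbl1 : ∀ r : ℝ, 1 ≤ r → ν r ≤ a₁ * ν (r + 1))
    (hdbl2 : ∀ r : ℝ, 0 < r → r ≤ 1 → ν r ≤ a₁ * ν (2 * r)) :
    ∀ v z : EuclideanSpace ℝ (Fin d), v ⟨0, hd⟩ > 0 → z ⟨0, hd⟩ > 0 → v ≠ z →
      ν ‖v - z‖ - ν ‖v - reflFirst z‖ ≤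
        (3 / 2) * (a₁ - 1) * ‖z - reflFirst z‖ * (ν ‖v - z‖ / min 1 ‖v - z‖) *
          (1 + ‖v - reflFirst z‖ / ‖v - z‖) := by
  intro v z hv hz hvz
  have hpos_dist : 0 < ‖v - z‖ := norm_sub_pos_iff.mpr hvz
  have hgap : ‖v - reflFirst z‖ - ‖v - z‖ ≤ ‖z - reflFirst z‖ := by
    simpa using norm_sub_norm_le (v - reflFirst z) (v - z)
  have hratio_anti : AntitoneOn (fun ρ => -ν' ρ / ρ) (Ioi 0) :=
    fun u hu _ _ huv => hratio u _ hu huv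
  refine (sub_le_three_halves_mul_sub ha₁ hpos habs hratio_anti hdbl1 hdbl2 hpos_dist
    (norm_sub_le_norm_sub_reflFirst hd hv hz)).trans ?_
  have hν := hpos _ hpos_dist
  gcongr

theorem difference_levy_density_bound
    {d : ℕ} (hd : 0 < d)
    (ν ν' : ℝ → ℝ) (a₁ : ℝ) (ha₁ : 1 ≤ a₁)
    (hpos : ∀ r > (0:ℝ), 0 < ν r)
    (hanti : ∀ u v : ℝ, 0 < u → u ≤ v → ν v ≤ ν u)
    (habs : ∀ r > (0:ℝ), ν r = -∫ ρ in Set.Ioi r, ν' ρ)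
    (hratio : ∀ u v : ℝ, 0 < u → u ≤ v → -ν' v / v ≤ -ν' u / u)
    (hdbl1 : ∀ r : ℝ, 1 ≤ r → ν r ≤ a₁ * ν (r + 1))
    (hdbl2 : ∀ r : ℝ, 0 < r → r ≤ 1 → ν r ≤ a₁ * ν (2 * r)) :
    ∀ v z : EuclideanSpace ℝ (Fin d), v ⟨0, hd⟩ > 0 → z ⟨0, hd⟩ > 0 → v ≠ z →
      ν ‖v - z‖ - ν ‖v - reflFirst z‖ ≤
        (3 / 2) * (a₁ - 1) * ‖z - reflFirst z‖ * (ν ‖v - z‖ / min 1 ‖v - z‖) *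
          (1 + ‖v - reflFirst z‖ / ‖v - z‖) :=
  difference_levy_density_bound_general hd ν ν' a₁ ha₁ hpos habs hratio hdbl1 hdbl2
end

section
/- Let $\nu:(0,\infty)\to(0,\infty)$ satisfy conditions (H1) with constant $a_1$. If $f:\mathbb{R}^d\to[0,\infty)$ is measurable and $\int_{\mathbb{R}^d} f(y)(\nu(|y|)\wedge 1)\,dy < \infty$, then for every $x\in\mathbb{R}^d$, $\int_{\mathbb{R}^d} f(y)(\nu(|x-y|)\wedge 1)\,dy < \infty$. -/
/-!
Truncate the kernel to `K r = min (ν r) 1`. With `s = ‖x‖` and `n = ⌈s⌉₊`, the kernel is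
comparable at arguments `t` and `r ≤ t + s`: for `t ≥ 1`, iterating `ν r ≤ a₁ ν (r + 1)` gives
`K t ≤ a₁ ^ n K (t + n) ≤ a₁ ^ n K r`, while for `t < 1` both `K t ≤ 1` and `K r ≥ K (1 + s) > 0`.
Since `‖y‖ ≤ ‖x - y‖ + ‖x‖`, this bounds `f y K ‖x - y‖` by a constant multiple of `f y K ‖y‖`.
-/

open MeasureTheory Set

/-- Extended by `1` to `r ≤ 0`, so that it is antitone on all of `ℝ` when `ν` is antitone
on `(0, ∞)`. -/
noncomputable def truncatedKernel (ν : ℝ → ℝ) (r : ℝ) : ℝ :=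
  if 0 < r then min (ν r) 1 else 1

section TruncatedKernel

variable {ν : ℝ → ℝ}

theorem truncatedKernel_of_pos {r : ℝ} (hr : 0 < r) : truncatedKernel ν r = min (ν r) 1 :=
  if_pos hr

theorem truncatedKernel_le_one (r : ℝ) : truncatedKernel ν r ≤ 1 := by
  unfold truncatedKernel
  split_ifs
  exacts [min_le_right _ _, le_rfl]

theorem truncatedKernel_pos (hpos : ∀ r > 0, 0 < ν r) (r : ℝ) : 0 < truncatedKernel ν r := by
  unfold truncatedKernel
  split_ifs with hr
  exacts [lt_min (hpos r hr) one_pos, one_pos]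

theorem antitone_truncatedKernel (hanti : AntitoneOn ν (Ioi 0)) :
    Antitone (truncatedKernel ν) := by
  intro u v huv
  by_cases hu : 0 < u
  · have hv : 0 < v := hu.trans_le huv
    rw [truncatedKernel_of_pos hu, truncatedKernel_of_pos hv]
    exact min_le_min_right 1 (hanti hu hv huv)
  · exact (truncatedKernel_le_one v).trans_eq (if_neg hu).symm

theorem le_pow_mul_add_nat {a : ℝ} (ha : 0 ≤ a) (hdbl : ∀ r, 1 ≤ r → ν r ≤ a * ν (r + 1))
    (n : ℕ) {t : ℝ} (ht : 1 ≤ t) : ν t ≤ a ^ n * ν (t + n) := by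
  induction n with
  | zero => simp
  | succ n ih =>
    calc ν t ≤ a ^ n * ν (t + n) := ih
      _ ≤ a ^ n * (a * ν (t + n + 1)) := by
          gcongr
          exact hdbl _ (by linarith [n.cast_nonneg (α := ℝ)])
      _ = a ^ (n + 1) * ν (t + ↑(n + 1)) := by push_cast; ring_nf

theorem exists_truncatedKernel_le_mul (hpos : ∀ r > 0, 0 < ν r) (hanti : AntitoneOn ν (Ioi 0))
    {a : ℝ} (ha : 1 ≤ a) (hdbl : ∀ r, 1 ≤ r → ν r ≤ a * ν (r + 1)) (s : ℝ) :
    ∃ C, ∀ r t, r ≤ t + s → truncatedKernel ν t ≤ C * truncatedKernel ν r := by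
  set K := truncatedKernel ν
  have hK : Antitone K := antitone_truncatedKernel hanti
  set n := ⌈s⌉₊
  set m := K (1 + s)
  have hm : 0 < m := truncatedKernel_pos hpos _
  have han : 1 ≤ a ^ n := one_le_pow₀ ha
  refine ⟨max (a ^ n) m⁻¹, fun r t hrt => ?_⟩
  rcases lt_or_ge t 1 with ht | ht
  · calc K t ≤ m⁻¹ * m := by rw [inv_mul_cancel₀ hm.ne']; exact truncatedKernel_le_one t
      _ ≤ max (a ^ n) m⁻¹ * K r := by
          gcongr
          · exact le_max_right _ _
          · exact hK (by linarith)
  · have htn : 0 < t + n := by positivity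
    calc K t = min (ν t) 1 := truncatedKernel_of_pos (by linarith)
      _ ≤ min (a ^ n * ν (t + n)) (a ^ n * 1) := by
          gcongr
          exacts [le_pow_mul_add_nat (by linarith) hdbl n ht, by linarith]
      _ = a ^ n * K (t + n) := by
          rw [← mul_min_of_nonneg _ _ (by linarith), ← truncatedKernel_of_pos htn]
      _ ≤ max (a ^ n) m⁻¹ * K r := by
          gcongr
          · exact (truncatedKernel_pos hpos _).le
          · exact le_max_left _ _
          · exact hK (by linarith [Nat.le_ceil s])

end TruncatedKernel

theorem MeasureTheory.Integrable.mul_comp_norm_sub {E : Type*} [NormedAddCommGroup E]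
    [MeasurableSpace E] [OpensMeasurableSpace E] {μ : Measure E} {f : E → ℝ} {g : ℝ → ℝ}
    (hf : Measurable f) (hfnn : ∀ y, 0 ≤ f y) (hg : Measurable g) (hgnn : ∀ r, 0 ≤ g r)
    {x : E} {C : ℝ} (hC : ∀ r t, r ≤ t + ‖x‖ → g t ≤ C * g r)
    (hint : Integrable (fun y => f y * g ‖y‖) μ) :
    Integrable (fun y => f y * g ‖x - y‖) μ := by
  refine (hint.const_mul C).mono' ?_ (Filter.Eventually.of_forall fun y => ?_)
  · have hxy : Measurable fun y => ‖x - y‖ := (continuous_const.sub continuous_id).norm.measurable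
    exact (hf.mul (hg.comp hxy)).aestronglyMeasurable
  · have hy : ‖y‖ ≤ ‖x - y‖ + ‖x‖ := by
      simpa [add_comm] using norm_sub_le x (x - y)
    rw [Real.norm_of_nonneg (mul_nonneg (hfnn y) (hgnn _)), mul_left_comm]
    exact mul_le_mul_of_nonneg_left (hC _ _ hy) (hfnn y)

theorem integrability_shift_general
    {d : ℕ} (hd : 1 ≤ d)
    (ν : ℝ → ℝ) (a₁ : ℝ) (ha₁ : 1 ≤ a₁)
    (hpos : ∀ r > (0:ℝ), 0 < ν r)
    (hanti : ∀ u v : ℝ, 0 < u → u ≤ v → ν v ≤ ν u)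
    (hdbl1 : ∀ r : ℝ, 1 ≤ r → ν r ≤ a₁ * ν (r + 1))
    (f : EuclideanSpace ℝ (Fin d) → ℝ) (hf : Measurable f) (hfnn : ∀ x, 0 ≤ f x)
    (hint : Integrable (fun y => f y * min (ν ‖y‖) 1)) :
    ∀ x : EuclideanSpace ℝ (Fin d),
      Integrable (fun y => f y * min (ν ‖x - y‖) 1) := by
  intro x
  have : Nontrivial (EuclideanSpace ℝ (Fin d)) :=
    have : Nonempty (Fin d) := ⟨⟨0, hd⟩⟩
    inferInstance
  have hanti' : AntitoneOn ν (Ioi 0) := fun u hu v _ huv => hanti u v hu huv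
  have hK : ∀ z y : EuclideanSpace ℝ (Fin d), y ≠ z →
      truncatedKernel ν ‖z - y‖ = min (ν ‖z - y‖) 1 := fun _ _ hy =>
    truncatedKernel_of_pos (norm_pos_iff.2 (sub_ne_zero.2 hy.symm))
  obtain ⟨C, hC⟩ := exists_truncatedKernel_le_mul hpos hanti' ha₁ hdbl1 ‖x‖
  have hint' : Integrable (fun y => f y * truncatedKernel ν ‖y‖) := by
    refine hint.congr ?_
    filter_upwards [volume.ae_ne 0] with y hy
    simpa using congrArg (f y * ·) (hK 0 y hy).symm
  refine (hint'.mul_comp_norm_sub hf hfnn (antitone_truncatedKernel hanti').measurable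
    (fun r => (truncatedKernel_pos hpos r).le) hC).congr ?_
  filter_upwards [volume.ae_ne x] with y hy
  rw [hK x y hy]

theorem integrability_shift
    {d : ℕ} (hd : 1 ≤ d)
    (ν ν' : ℝ → ℝ) (a₁ : ℝ) (ha₁ : 1 ≤ a₁)
    (hpos : ∀ r > (0:ℝ), 0 < ν r)
    (hanti : ∀ u v : ℝ, 0 < u → u ≤ v → ν v ≤ ν u)
    (habs : ∀ r > (0:ℝ), ν r = -∫ ρ in Set.Ioi r, ν' ρ)
    (hratio : ∀ u v : ℝ, 0 < u → u ≤ v → -ν' v / v ≤ -ν' u / u)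
    (hdbl1 : ∀ r : ℝ, 1 ≤ r → ν r ≤ a₁ * ν (r + 1))
    (hdbl2 : ∀ r : ℝ, 0 < r → r ≤ 1 → ν r ≤ a₁ * ν (2 * r))
    (f : EuclideanSpace ℝ (Fin d) → ℝ) (hf : Measurable f) (hfnn : ∀ x, 0 ≤ f x)
    (hint : Integrable (fun y => f y * min (ν ‖y‖) 1)) :
    ∀ x : EuclideanSpace ℝ (Fin d),
      Integrable (fun y => f y * min (ν ‖x - y‖) 1) :=
  integrability_shift_general hd ν a₁ ha₁ hpos hanti hdbl1 f hf hfnn hint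
end

section
/- Let $\alpha\in(0,1/2)$, $\gamma\in(1/2,1)$ with $\alpha+\gamma<1$, $\beta\in(0,1)$ with $\alpha-\beta+\gamma<0$, and let $\mathcal{A}>0$. Define $g:\mathbb{R}\to\mathbb{R}$ for $y\in(0,1/2)$ by $g(y) = \mathcal{A}\int_1^{1+y}(z-y)^{-1-\alpha}(z-1)^{-\beta}dz + \mathcal{A}\int_{1+y}^2 (1-(z-y-1)^\gamma)(z-1)^{-\beta}dz$ and $g(-y) = \mathcal{A}\int_1^2 (z-1)^{-\beta}dz - \mathcal{A}\int_1^2 (z+y-1)^\gamma (z-1)^{-\beta}dz$. Then there is $c = c(\alpha,\beta,\gamma,\mathcal{A}) > 0$ such that $g(y)-g(-y) \ge c\, y^{1-\beta+\gamma}$ for all $y\in(0,1/2)$. -/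
/-! Write `w(z) = (z - 1)^(-β)`. Splitting the integrals over `[1, 2]` at `1 + y` turns
`g(y) - g(-y)` into `A` times
`∫₁^{1+y} ((z - y)^(-1-α) - 1) w + ∫_{1+y}^2 ((z + y - 1)^γ - (z - y - 1)^γ) w + ∫₁^{1+y} (z + y - 1)^γ w`.
The first term is nonnegative since `0 < z - y ≤ 1` on `[1, 1 + y]`, the second since `t ↦ t^γ` is
monotone, and the last is at least `∫₁^{1+y} (z - 1)^(γ-β) dz = y^(1-β+γ) / (1-β+γ)`. -/

open Real intervalIntegral MeasureTheory

section SubRpow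

variable {r : ℝ}

lemma intervalIntegrable_sub_rpow (hr : -1 < r) (c a b : ℝ) :
    IntervalIntegrable (fun z => (z - c) ^ r) volume a b := by
  simpa using (intervalIntegrable_rpow' hr (a := a - c) (b := b - c)).comp_sub_right c

lemma intervalIntegrable_mul_sub_rpow {g : ℝ → ℝ} (hg : Continuous g) (hr : -1 < r)
    (c a b : ℝ) : IntervalIntegrable (fun z => g z * (z - c) ^ r) volume a b :=
  (intervalIntegrable_sub_rpow hr c a b).continuousOn_mul hg.continuousOn

lemma integral_sub_rpow (hr : -1 < r) (c y : ℝ) :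
    ∫ z in c..c + y, (z - c) ^ r = y ^ (r + 1) / (r + 1) := by
  rw [integral_comp_sub_right (fun z => z ^ r), integral_rpow (Or.inl hr), sub_self,
    add_sub_cancel_left, zero_rpow (by linarith), sub_zero]

end SubRpow

section Comparison

variable {p r y : ℝ}

lemma integral_sub_rpow_le_integral_rpow_mul_sub_rpow {s : ℝ} (hr : -1 < r) (hs : s ≤ 0)
    (hy₀ : 0 ≤ y) (hy₁ : y < 1) :
    ∫ z in (1:ℝ)..1 + y, (z - 1) ^ r ≤ ∫ z in (1:ℝ)..1 + y, (z - y) ^ s * (z - 1) ^ r := by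
  have hcont : ContinuousOn (fun z : ℝ => (z - y) ^ s) (Set.uIcc 1 (1 + y)) := by
    refine ContinuousOn.rpow_const (by fun_prop) fun z hz => Or.inl ?_
    rw [Set.uIcc_of_le (by linarith)] at hz
    linarith [hz.1]
  refine integral_mono_on (by linarith) (intervalIntegrable_sub_rpow hr 1 1 (1 + y))
    ((intervalIntegrable_sub_rpow hr 1 1 (1 + y)).continuousOn_mul hcont) fun z hz => ?_
  have hone : 1 ≤ (z - y) ^ s :=
    one_le_rpow_of_pos_of_le_one_of_nonpos (by linarith [hz.1]) (by linarith [hz.2]) hs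
  exact le_mul_of_one_le_left (rpow_nonneg (by linarith [hz.1]) r) hone

lemma integral_sub_rpow_mul_le_integral_add_rpow_mul {c d : ℝ} (hp : 0 ≤ p) (hr : -1 < r)
    (hy : 0 ≤ y) (hcd : c + y ≤ d) :
    ∫ z in c + y..d, (z - y - c) ^ p * (z - c) ^ r ≤
      ∫ z in c + y..d, (z + y - c) ^ p * (z - c) ^ r := by
  refine integral_mono_on hcd
    (intervalIntegrable_mul_sub_rpow (by fun_prop (disch := assumption)) hr c _ _)
    (intervalIntegrable_mul_sub_rpow (by fun_prop (disch := assumption)) hr c _ _)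
    fun z hz => ?_
  exact mul_le_mul_of_nonneg_right (rpow_le_rpow (by linarith [hz.1]) (by linarith) hp)
    (rpow_nonneg (by linarith [hz.1]) r)

lemma rpow_div_le_integral_add_rpow_mul_sub_rpow (c : ℝ) (hp : 0 ≤ p) (hr : -1 < r)
    (hy : 0 ≤ y) :
    y ^ (p + r + 1) / (p + r + 1) ≤ ∫ z in c..c + y, (z + y - c) ^ p * (z - c) ^ r := by
  rw [← integral_sub_rpow (by linarith) c y]
  refine integral_mono_on_of_le_Ioo (by linarith) (intervalIntegrable_sub_rpow (by linarith) c _ _)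
    (intervalIntegrable_mul_sub_rpow (by fun_prop (disch := assumption)) hr c _ _)
    fun z hz => ?_
  have hz₀ : 0 < z - c := by linarith [hz.1]
  rw [rpow_add hz₀]
  exact mul_le_mul_of_nonneg_right (rpow_le_rpow hz₀.le (by linarith) hp) (rpow_nonneg hz₀.le r)

end Comparison

theorem counterexample_source_asymmetry_lower_bound_general
    (α γ β A : ℝ)
    (hα : α ∈ Set.Ioo (0:ℝ) (1/2)) (hγ : γ ∈ Set.Ioo (1/2:ℝ) 1)
    (hβ : β ∈ Set.Ioo (0:ℝ) 1)
    (hA : 0 < A) :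
    ∃ c > (0:ℝ), ∀ y ∈ Set.Ioo (0:ℝ) (1/2),
      ((A * ∫ z in (1:ℝ)..(1 + y), (z - y) ^ (-(1 + α)) * (z - 1) ^ (-β)) +
        A * ∫ z in (1 + y)..(2:ℝ), (1 - (z - y - 1) ^ γ) * (z - 1) ^ (-β)) -
      ((A * ∫ z in (1:ℝ)..(2:ℝ), (z - 1) ^ (-β)) -
        A * ∫ z in (1:ℝ)..(2:ℝ), (z + y - 1) ^ γ * (z - 1) ^ (-β))
      ≥ c * y ^ (1 - β + γ) := by
  have hr : -1 < -β := by linarith [hβ.2]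
  have hγ₀ : 0 ≤ γ := by linarith [hγ.1]
  have he : 0 < 1 - β + γ := by linarith [hβ.2]
  refine ⟨A / (1 - β + γ), div_pos hA he, fun y ⟨hy₀, hy₁⟩ => ?_⟩
  have hsource := integral_sub_rpow_le_integral_rpow_mul_sub_rpow (s := -(1 + α)) hr
    (by linarith [hα.1]) hy₀.le (by linarith)
  have hshift := integral_sub_rpow_mul_le_integral_add_rpow_mul (c := 1) (d := 2) hγ₀ hr hy₀.le
    (by linarith)
  have hnear := rpow_div_le_integral_add_rpow_mul_sub_rpow 1 hγ₀ hr hy₀.le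
  rw [show γ + -β + 1 = 1 - β + γ by ring] at hnear
  have hw := intervalIntegrable_sub_rpow hr 1
  have hK := intervalIntegrable_mul_sub_rpow (g := fun z => (z + y - 1) ^ γ)
    (by fun_prop (disch := assumption)) hr 1
  have hL := intervalIntegrable_mul_sub_rpow (g := fun z => (z - y - 1) ^ γ)
    (by fun_prop (disch := assumption)) hr 1
  simp only [sub_mul, one_mul]
  rw [integral_sub (hw _ _) (hL _ _), ← integral_add_adjacent_intervals (hw 1 (1 + y)) (hw _ 2),
    ← integral_add_adjacent_intervals (hK 1 (1 + y)) (hK _ 2), div_mul_eq_mul_div, mul_div_assoc]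
  linarith [mul_le_mul_of_nonneg_left hsource hA.le, mul_le_mul_of_nonneg_left hshift hA.le,
    mul_le_mul_of_nonneg_left hnear hA.le]

theorem counterexample_source_asymmetry_lower_bound
    (α γ β A : ℝ)
    (hα : α ∈ Set.Ioo (0:ℝ) (1/2)) (hγ : γ ∈ Set.Ioo (1/2:ℝ) 1)
    (hαγ : α + γ < 1) (hβ : β ∈ Set.Ioo (0:ℝ) 1) (hαβγ : α - β + γ < 0)
    (hA : 0 < A) :
    ∃ c > (0:ℝ), ∀ y ∈ Set.Ioo (0:ℝ) (1/2),
      ((A * ∫ z in (1:ℝ)..(1 + y), (z - y) ^ (-(1 + α)) * (z - 1) ^ (-β)) +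
        A * ∫ z in (1 + y)..(2:ℝ), (1 - (z - y - 1) ^ γ) * (z - 1) ^ (-β)) -
      ((A * ∫ z in (1:ℝ)..(2:ℝ), (z - 1) ^ (-β)) -
        A * ∫ z in (1:ℝ)..(2:ℝ), (z + y - 1) ^ γ * (z - 1) ^ (-β))
      ≥ c * y ^ (1 - β + γ) :=
  counterexample_source_asymmetry_lower_bound_general α γ β A hα hγ hβ hA
end
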